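/- arXiv:2105.03401 — 10 statements merged into one kernel-verified Lean document; each statement's English description precedes it below -/
import Mathlib

section
/- Let A₁ ⊆ A₂ ⊆ ℝ be Borel sets and μ, ν finite nonnegative Borel measures on A₂ with ν(A₁) > 0 and ν(A₂) > ν(A₁). Suppose μ is absolutely continuous with respect to ν with density f, and define the localized relative entropy E(μ|ν,A₂) = ∫_{A₂} f log f dν − μ(A₂) log(μ(A₂)/ν(A₂)). Then μ(A₁) ≤ (E(μ|ν,A₂) + μ(A₂)) / log(ν(A₂)/ν(A₁)). -/
open MeasureTheory Real

lemma young_aux (s t : ℝ) (hs : 0 ≤ s) : s * t ≤ s * Real.log s - s + Real.exp t := by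
  rcases hs.eq_or_lt with h | h
  · simp [← h]; positivity
  · have h1 : t - Real.log s + 1 ≤ Real.exp (t - Real.log s) := Real.add_one_le_exp _
    have h2 : s * (t - Real.log s + 1) ≤ s * Real.exp (t - Real.log s) :=
      mul_le_mul_of_nonneg_left h1 hs
    rw [Real.exp_sub, Real.exp_log h] at h2
    have h3 : s * (Real.exp t / s) = Real.exp t := by field_simp
    nlinarith

theorem concentration_estimate
    (μ ν : Measure ℝ) (hμfin : IsFiniteMeasure μ) (hνfin : IsFiniteMeasure ν)
    (A₁ A₂ : Set ℝ) (hA₁ : MeasurableSet A₁) (hA₂ : MeasurableSet A₂) (hsub : A₁ ⊆ A₂)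
    (f : ℝ → ℝ) (hf : Measurable f) (hf0 : ∀ x, 0 ≤ f x)
    (hden : μ = ν.withDensity (fun x => ENNReal.ofReal (f x)))
    (hν₁ : 0 < (ν A₁).toReal)
    (hlog : 0 < Real.log ((ν A₂).toReal / (ν A₁).toReal))
    (hint : IntegrableOn (fun x => f x * Real.log (f x)) A₂ ν) :
    (μ A₁).toReal ≤
      ((∫ x in A₂, f x * Real.log (f x) ∂ν
          - (μ A₂).toReal * Real.log ((μ A₂).toReal / (ν A₂).toReal))
        + (μ A₂).toReal) / Real.log ((ν A₂).toReal / (ν A₁).toReal) := by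
  have hμA₂fin : μ A₂ ≠ ⊤ := measure_ne_top μ A₂
  set n1 := (ν A₁).toReal with hn1def
  set n2 := (ν A₂).toReal with hn2def
  set m := (μ A₂).toReal with hmdef
  set m1 := (μ A₁).toReal with hm1def
  set L := Real.log (n2 / n1) with hLdef
  have hr1 : 1 < n2 / n1 := by
    by_contra h
    push_neg at h
    exact absurd (Real.log_nonpos (by positivity) h) (not_le.2 hlog)
  have hn12 : n1 < n2 := (one_lt_div hν₁).mp hr1
  have hn2 : 0 < n2 := lt_trans hν₁ hn12
  have hexpL : Real.exp L = n2 / n1 := Real.exp_log (by positivity)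
  have hμ_apply : ∀ s : Set ℝ, MeasurableSet s → μ s = ∫⁻ x in s, ENNReal.ofReal (f x) ∂ν := by
    intro s hs
    rw [hden, withDensity_apply _ hs]
  -- f is integrable on A₂
  have hfint : IntegrableOn f A₂ ν := by
    refine ⟨hf.aestronglyMeasurable, ?_⟩
    have heq : ∫⁻ x in A₂, ‖f x‖ₑ ∂ν = μ A₂ := by
      rw [hμ_apply A₂ hA₂]
      refine lintegral_congr fun x => ?_
      rw [← Real.enorm_eq_ofReal (hf0 x)]
    rw [HasFiniteIntegral, heq]
    exact hμA₂fin.lt_top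
  have hfint1 : IntegrableOn f A₁ ν := hfint.mono_set hsub
  have hint_eq : ∀ s : Set ℝ, MeasurableSet s → (μ s).toReal = ∫ x in s, f x ∂ν := by
    intro s hs
    rw [hμ_apply s hs,
      integral_eq_lintegral_of_nonneg_ae (ae_of_all _ hf0) hf.aestronglyMeasurable]
  have key : ∀ c : ℝ, L * m1 ≤ (∫ x in A₂, f x * Real.log (f x) ∂ν) - m
      + Real.exp (-c) * (n2 + (Real.exp L - 1) * n1) + c * m := by
    intro c
    set g : ℝ → ℝ := A₁.indicator (fun y => L * f y) with hg
    set h : ℝ → ℝ := fun x => f x * Real.log (f x) - f x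
      + Real.exp (L * A₁.indicator (fun _ => (1:ℝ)) x - c) + c * f x with hh
    have hexp_eq : (fun x => Real.exp (L * A₁.indicator (fun _ => (1:ℝ)) x - c))
        = fun x => Real.exp (-c) + A₁.indicator (fun _ => Real.exp (L - c) - Real.exp (-c)) x := by
      funext x
      by_cases hx : x ∈ A₁
      · simp [Set.indicator_of_mem hx]
      · simp [Set.indicator_of_notMem hx]
    have hexp_int : IntegrableOn
        (fun x => Real.exp (L * A₁.indicator (fun _ => (1:ℝ)) x - c)) A₂ ν := by
      rw [hexp_eq]
      exact (integrable_const _).add ((integrable_const _).indicator hA₁)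
    have hhint : IntegrableOn h A₂ ν :=
      ((hint.sub hfint).add hexp_int).add (hfint.const_mul c)
    have hgint : IntegrableOn g A₂ ν := (hfint.const_mul L).indicator hA₁
    have hpt : ∀ x ∈ A₂, g x ≤ h x := by
      intro x _
      have hy := young_aux (f x) (L * A₁.indicator (fun _ => (1:ℝ)) x - c) (hf0 x)
      by_cases hx : x ∈ A₁
      · simp only [hg, hh, Set.indicator_of_mem hx] at hy ⊢
        nlinarith [hy]
      · simp only [hg, hh, Set.indicator_of_notMem hx] at hy ⊢
        nlinarith [hy]
    have hmono := setIntegral_mono_on hgint hhint hA₂ hpt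
    have hgval : ∫ x in A₂, g x ∂ν = L * m1 := by
      rw [hg, setIntegral_indicator hA₁, Set.inter_eq_self_of_subset_right hsub,
        integral_const_mul, hm1def, hint_eq A₁ hA₁]
    have hexpval : ∫ x in A₂, Real.exp (L * A₁.indicator (fun _ => (1:ℝ)) x - c) ∂ν
        = Real.exp (-c) * (n2 + (Real.exp L - 1) * n1) := by
      rw [hexp_eq, integral_add (integrable_const _) ((integrable_const _).indicator hA₁),
        setIntegral_const, setIntegral_indicator hA₁, Set.inter_eq_self_of_subset_right hsub,
        setIntegral_const]
      simp only [smul_eq_mul, Real.exp_sub, Real.exp_neg, measureReal_def, ← hn1def, ← hn2def]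
      ring
    have hfeq : ∫ x in A₂, f x ∂ν = m := (hint_eq A₂ hA₂).symm
    have i1 : IntegrableOn (fun x => f x * Real.log (f x) - f x) A₂ ν := hint.sub hfint
    have i2 : IntegrableOn (fun x => f x * Real.log (f x) - f x
        + Real.exp (L * A₁.indicator (fun _ => (1:ℝ)) x - c)) A₂ ν := i1.add hexp_int
    have i3 : IntegrableOn (fun x => c * f x) A₂ ν := hfint.const_mul c
    have hhval : ∫ x in A₂, h x ∂ν = (∫ x in A₂, f x * Real.log (f x) ∂ν) - m
        + Real.exp (-c) * (n2 + (Real.exp L - 1) * n1) + c * m := by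
      rw [hh, integral_add i2 i3, integral_add i1 hexp_int, integral_sub hint hfint,
        integral_const_mul, hexpval, hfeq]
    rw [hgval, hhval] at hmono
    exact hmono
  by_cases hm0 : m = 0
  · have hμ0 : μ A₂ = 0 := by
      rcases (ENNReal.toReal_eq_zero_iff _).mp hm0 with h | h
      · exact h
      · exact absurd h hμA₂fin
    have hμ10 : μ A₁ = 0 := le_antisymm (hμ0 ▸ measure_mono hsub) (zero_le)
    have hI : ∫ x in A₂, f x * Real.log (f x) ∂ν = 0 := by
      have h0 : (fun x => ENNReal.ofReal (f x)) =ᵐ[ν.restrict A₂] 0 := by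
        rw [← lintegral_eq_zero_iff hf.ennreal_ofReal]
        exact (hμ_apply A₂ hA₂).symm.trans hμ0
      have hfz : f =ᵐ[ν.restrict A₂] 0 := by
        filter_upwards [h0] with x hx
        have : ENNReal.ofReal (f x) = 0 := hx
        rw [ENNReal.ofReal_eq_zero] at this
        exact le_antisymm this (hf0 x)
      calc ∫ x in A₂, f x * Real.log (f x) ∂ν = ∫ x in A₂, (0:ℝ) ∂ν := by
            refine integral_congr_ae ?_
            filter_upwards [hfz] with x hx
            simp [hx]
        _ = 0 := by simp
    have hm1z : m1 = 0 := by rw [hm1def, hμ10]; simp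
    rw [hm1z, hm0, hI]
    simp
  · have hmpos : 0 < m := lt_of_le_of_ne ENNReal.toReal_nonneg (Ne.symm hm0)
    set M := 2 * n2 - n1 with hMdef
    have hM : 0 < M := by simp only [hMdef]; linarith
    have hkey := key (Real.log (M / m))
    have hMeq : n2 + (Real.exp L - 1) * n1 = M := by
      rw [hexpL, hMdef]
      field_simp
      ring
    have hexpc : Real.exp (-Real.log (M / m)) = m / M := by
      rw [Real.exp_neg, Real.exp_log (by positivity), inv_div]
    rw [hMeq, hexpc] at hkey
    have hdm : m / M * M = m := by field_simp
    rw [hdm] at hkey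
    have hlogdiv : Real.log (M / m) = Real.log M - Real.log m :=
      Real.log_div (ne_of_gt hM) (ne_of_gt hmpos)
    have hlogM : Real.log M ≤ Real.log n2 + 1 := by
      have h1 : Real.log M ≤ Real.log (2 * n2) :=
        Real.log_le_log hM (by simp only [hMdef]; linarith)
      have h2 : Real.log (2 * n2) = Real.log 2 + Real.log n2 :=
        Real.log_mul two_ne_zero (ne_of_gt hn2)
      have h3 : Real.log 2 < 1 := by
        have := Real.log_two_lt_d9
        linarith
      linarith
    have hlogm2 : Real.log (m / n2) = Real.log m - Real.log n2 :=
      Real.log_div (ne_of_gt hmpos) (ne_of_gt hn2)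
    rw [le_div_iff₀ hlog]
    have hmul : m * Real.log M ≤ m * (Real.log n2 + 1) :=
      mul_le_mul_of_nonneg_left hlogM (le_of_lt hmpos)
    nlinarith [hkey, hmul]
end

section
/- In the special case μ(A₂) = ν(A₂) = 1 with μ = f·ν: for any a > 0, μ(A₁) ≤ (1/a)·∫_{A₂} (f log f − f + 1) dν + (e^a/a)·ν(A₁). In particular, choosing a = −log ν(A₁) (assuming 0 < ν(A₁) < 1) yields μ(A₁) ≤ (E(μ|ν,A₂) + 1)/|log ν(A₁)|, where E(μ|ν,A₂) = ∫_{A₂} f log f dν. -/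
open MeasureTheory Real

lemma aux_young (a u : ℝ) (hu : 0 ≤ u) :
    a * u ≤ u * Real.log u - u + Real.exp a := by
  rcases eq_or_lt_of_le hu with h | h
  · rw [← h]; simp; positivity
  · have h1 : (a - Real.log u) + 1 ≤ Real.exp (a - Real.log u) :=
      Real.add_one_le_exp _
    have h2 : u * Real.exp (a - Real.log u) = Real.exp a := by
      rw [Real.exp_sub, Real.exp_log h]
      field_simp
    nlinarith [mul_le_mul_of_nonneg_left h1 hu]

lemma aux_nonneg (u : ℝ) (hu : 0 ≤ u) : 0 ≤ u * Real.log u - u + 1 := by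
  rcases eq_or_lt_of_le hu with h | h
  · rw [← h]; simp
  · have h1 := Real.log_le_sub_one_of_pos (show (0:ℝ) < u⁻¹ by positivity)
    rw [Real.log_inv] at h1
    have h2 : u⁻¹ * u = 1 := inv_mul_cancel₀ h.ne'
    nlinarith

theorem concentration_estimate_probability
    (μ ν : Measure ℝ) (A₁ A₂ : Set ℝ)
    (hA₁ : MeasurableSet A₁) (hA₂ : MeasurableSet A₂) (hsub : A₁ ⊆ A₂)
    (f : ℝ → ℝ) (hf : Measurable f) (hf0 : ∀ x, 0 ≤ f x)
    (hden : μ = ν.withDensity (fun x => ENNReal.ofReal (f x)))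
    (hμ1 : (μ A₂).toReal = 1) (hν1 : (ν A₂).toReal = 1)
    (hν₁pos : 0 < (ν A₁).toReal) (hν₁lt : (ν A₁).toReal < 1)
    (hμfin : IsFiniteMeasure μ) (hνfin : IsFiniteMeasure ν)
    (hint : IntegrableOn (fun x => f x * Real.log (f x)) A₂ ν)
    (hintf : IntegrableOn f A₂ ν) :
    (∀ a : ℝ, 0 < a →
      (μ A₁).toReal ≤
        (1 / a) * ∫ x in A₂, (f x * Real.log (f x) - f x + 1) ∂ν
          + (Real.exp a / a) * (ν A₁).toReal) ∧
    (μ A₁).toReal ≤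
      ((∫ x in A₂, f x * Real.log (f x) ∂ν) + 1) / |Real.log (ν A₁).toReal| := by
  have hνA₂ : ν A₂ ≠ ⊤ := measure_ne_top ν A₂
  have hνA₁ : ν A₁ ≠ ⊤ := measure_ne_top ν A₁
  have hintg : IntegrableOn (fun x => f x * Real.log (f x) - f x + 1) A₂ ν :=
    (hint.sub hintf).add (integrableOn_const hνA₂)
  have hμset : ∀ (s : Set ℝ), MeasurableSet s → s ⊆ A₂ → (μ s).toReal = ∫ x in s, f x ∂ν := by
    intro s hs hss
    rw [hden, withDensity_apply _ hs,
      ← ofReal_integral_eq_lintegral_ofReal (hintf.mono_set hss)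
        (Filter.Eventually.of_forall fun x => hf0 x),
      ENNReal.toReal_ofReal (integral_nonneg fun x => hf0 x)]
  have hμA₁ : (μ A₁).toReal = ∫ x in A₁, f x ∂ν := hμset A₁ hA₁ hsub
  -- the first part
  have part1 : ∀ a : ℝ, 0 < a →
      (μ A₁).toReal ≤
        (1 / a) * ∫ x in A₂, (f x * Real.log (f x) - f x + 1) ∂ν
          + (Real.exp a / a) * (ν A₁).toReal := by
    intro a ha
    have key : a * ∫ x in A₁, f x ∂ν ≤
        (∫ x in A₂, (f x * Real.log (f x) - f x + 1) ∂ν)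
          + Real.exp a * (ν A₁).toReal := by
      have h1 : a * ∫ x in A₁, f x ∂ν = ∫ x in A₁, a * f x ∂ν :=
        (integral_const_mul a f).symm
      have h2 : ∫ x in A₁, a * f x ∂ν ≤
          ∫ x in A₁, ((f x * Real.log (f x) - f x + 1) + (Real.exp a - 1)) ∂ν := by
        apply integral_mono ((hintf.mono_set hsub).const_mul a)
          (((hintg.mono_set hsub)).add (integrableOn_const hνA₁))
        intro x
        have := aux_young a (f x) (hf0 x)
        simp only [Pi.add_apply]
        linarith
      have h3 : ∫ x in A₁, ((f x * Real.log (f x) - f x + 1) + (Real.exp a - 1)) ∂ν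
          = (∫ x in A₁, (f x * Real.log (f x) - f x + 1) ∂ν)
            + (Real.exp a - 1) * (ν A₁).toReal := by
        rw [integral_add (hintg.mono_set hsub)
          (integrableOn_const hνA₁)]
        rw [setIntegral_const, smul_eq_mul, measureReal_def, mul_comm ((ν A₁).toReal)]
      have h4 : ∫ x in A₁, (f x * Real.log (f x) - f x + 1) ∂ν
          ≤ ∫ x in A₂, (f x * Real.log (f x) - f x + 1) ∂ν := by
        apply setIntegral_mono_set hintg
          (Filter.Eventually.of_forall fun x => aux_nonneg (f x) (hf0 x))
          (HasSubset.Subset.eventuallyLE hsub)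
      have h5 : (Real.exp a - 1) * (ν A₁).toReal ≤ Real.exp a * (ν A₁).toReal := by
        apply mul_le_mul_of_nonneg_right (by linarith) hν₁pos.le
      linarith [h1, h2, h3, h4, h5]
    rw [hμA₁]
    have heq : (1 / a) * (∫ x in A₂, (f x * Real.log (f x) - f x + 1) ∂ν)
        + (Real.exp a / a) * (ν A₁).toReal
        = ((∫ x in A₂, (f x * Real.log (f x) - f x + 1) ∂ν)
          + Real.exp a * (ν A₁).toReal) / a := by
      field_simp
    rw [heq, le_div_iff₀ ha, mul_comm]
    exact key
  refine ⟨part1, ?_⟩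
  -- the second part
  have hlogneg : Real.log (ν A₁).toReal < 0 := Real.log_neg hν₁pos hν₁lt
  set a : ℝ := -Real.log (ν A₁).toReal with ha_def
  have ha : 0 < a := neg_pos.mpr hlogneg
  have habs : |Real.log (ν A₁).toReal| = a := abs_of_neg hlogneg
  have hexp : Real.exp a * (ν A₁).toReal = 1 := by
    rw [ha_def, Real.exp_neg, Real.exp_log hν₁pos, inv_mul_cancel₀ hν₁pos.ne']
  have hf1 : ∫ x in A₂, f x ∂ν = 1 := by rw [← hμset A₂ hA₂ (le_refl _), hμ1]
  have hgeq : ∫ x in A₂, (f x * Real.log (f x) - f x + 1) ∂ν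
      = ∫ x in A₂, f x * Real.log (f x) ∂ν := by
    have hsubint : IntegrableOn (fun x => f x * Real.log (f x) - f x) A₂ ν :=
      hint.sub hintf
    rw [integral_add hsubint (integrableOn_const hνA₂),
      integral_sub hint hintf, setIntegral_const, hf1, smul_eq_mul, mul_one, measureReal_def, hν1]
    ring
  have := part1 a ha
  rw [hgeq] at this
  calc (μ A₁).toReal ≤ (1 / a) * (∫ x in A₂, f x * Real.log (f x) ∂ν)
        + (Real.exp a / a) * (ν A₁).toReal := this
    _ = ((∫ x in A₂, f x * Real.log (f x) ∂ν) + 1) / |Real.log (ν A₁).toReal| := by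
        rw [habs]
        field_simp
        linarith [hexp]
end

section
/- (Generalized Poincaré inequality) Let −∞ < a < b < ∞ and let μ be a bounded nonnegative Borel measure on [a,b] with μ([a,b]) > 0. Then there is a constant C > 0 depending only on a and b such that for all f ∈ H¹(a,b) ∩ L²(a,b;μ): ‖f‖²_{L^∞(a,b)} ≤ C·(‖f′‖²_{L²(a,b)} + μ([a,b])^{−1}·‖f‖²_{L²(a,b;μ)}). -/
open MeasureTheory Real

/-- Generalized Poincaré inequality.  `H¹(a,b)` functions are represented by
(absolutely) continuous functions `f` given as primitives of a square-integrable
weak derivative `f'`; the `L^∞` bound is expressed pointwise on `[a,b]`, which is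
equivalent to the essential-sup bound for such a continuous representative. -/
theorem generalized_poincare (a b : ℝ) (hab : a < b) :
    ∃ C : ℝ, 0 < C ∧
      ∀ (μ : Measure ℝ), IsFiniteMeasure μ → 0 < (μ (Set.Icc a b)).toReal →
        ∀ f f' : ℝ → ℝ,
          (∀ x ∈ Set.Icc a b, ∀ y ∈ Set.Icc a b, f x - f y = ∫ s in y..x, f' s) →
          MemLp f' 2 (volume.restrict (Set.Icc a b)) →
          MemLp f 2 (μ.restrict (Set.Icc a b)) →
          ∀ x ∈ Set.Icc a b,
            f x ^ 2 ≤ C * ((∫ s in Set.Icc a b, f' s ^ 2)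
              + ((μ (Set.Icc a b)).toReal)⁻¹ * ∫ s in Set.Icc a b, f s ^ 2 ∂μ) := by
  refine ⟨2 * (b - a) + 2, by nlinarith, ?_⟩
  intro μ hμfin hμpos f f' hfund hf' hf x hx
  set M := (μ (Set.Icc a b)).toReal with hM
  haveI : IsFiniteMeasure (volume.restrict (Set.Icc a b)) := by
    constructor
    rw [Measure.restrict_apply_univ, Real.volume_Icc]
    exact ENNReal.ofReal_lt_top
  have hf'int : IntegrableOn f' (Set.Icc a b) := hf'.integrable one_le_two
  have hf'sq : IntegrableOn (fun s => f' s ^ 2) (Set.Icc a b) := hf'.integrable_sq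
  set K := ∫ s in Set.Icc a b, f' s ^ 2 with hKdef
  have hK0 : 0 ≤ K := integral_nonneg fun s => sq_nonneg _
  set L := ∫ s in Set.Icc a b, f s ^ 2 ∂μ with hLdef
  have hL0 : 0 ≤ L := integral_nonneg fun s => sq_nonneg _
  -- Cauchy–Schwarz
  have hA0 : 0 ≤ ∫ s in Set.Icc a b, |f' s| := integral_nonneg fun s => abs_nonneg _
  have hCS : (∫ s in Set.Icc a b, |f' s|) ^ 2 ≤ (b - a) * K := by
    have hconj : Real.HolderConjugate 2 2 := ⟨by norm_num, by norm_num, by norm_num⟩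
    have hone : MemLp (fun _ : ℝ => (1 : ℝ)) (ENNReal.ofReal 2)
        (volume.restrict (Set.Icc a b)) := memLp_const 1
    have habs : MemLp (fun s => |f' s|) (ENNReal.ofReal 2)
        (volume.restrict (Set.Icc a b)) := by
      have := hf'.norm
      simpa [Real.norm_eq_abs, ENNReal.ofReal_ofNat] using this
    have key := integral_mul_le_Lp_mul_Lq_of_nonneg hconj
      (ae_of_all _ fun s => zero_le_one) (ae_of_all _ fun s => abs_nonneg (f' s)) hone habs
    simp only [one_mul, Real.one_rpow] at key
    have h1 : (∫ _ in Set.Icc a b, (1 : ℝ)) = b - a := by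
      rw [setIntegral_const, smul_eq_mul, mul_one, measureReal_def, Real.volume_Icc,
        ENNReal.toReal_ofReal (by linarith)]
    have h2 : (∫ s in Set.Icc a b, |f' s| ^ (2 : ℝ)) = K := by
      rw [hKdef]
      congr 1
      ext s
      rw [show ((2:ℝ)) = ((2:ℕ):ℝ) by norm_num, Real.rpow_natCast, sq_abs]
    rw [h1, h2] at key
    have hsq := pow_le_pow_left₀ hA0 key 2
    calc (∫ s in Set.Icc a b, |f' s|) ^ 2
        ≤ ((b - a) ^ (1 / 2 : ℝ) * K ^ (1 / 2 : ℝ)) ^ 2 := hsq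
      _ = (b - a) * K := by
          rw [mul_pow, ← Real.rpow_natCast ((b - a) ^ (1/2 : ℝ)) 2,
            ← Real.rpow_natCast (K ^ (1/2 : ℝ)) 2,
            ← Real.rpow_mul (by linarith : (0:ℝ) ≤ b - a), ← Real.rpow_mul hK0]
          norm_num
  -- pointwise bound
  have hpt : ∀ y ∈ Set.Icc a b, f x ^ 2 ≤ 2 * (b - a) * K + 2 * f y ^ 2 := by
    intro y hy
    have h1 : f x - f y = ∫ s in y..x, f' s := hfund x hx y hy
    have h2 : |∫ s in y..x, f' s| ≤ ∫ s in Set.Icc a b, |f' s| := by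
      calc |∫ s in y..x, f' s| ≤ ∫ s in Set.uIoc y x, |f' s| := by
            simpa [Real.norm_eq_abs] using
              intervalIntegral.norm_integral_le_integral_norm_uIoc (a := y) (b := x)
                (μ := volume) (f := f')
        _ ≤ ∫ s in Set.Icc a b, |f' s| := by
            apply setIntegral_mono_set hf'int.abs
              (ae_of_all _ fun s => abs_nonneg _)
            exact HasSubset.Subset.eventuallyLE
              (Set.uIoc_subset_uIcc.trans (Set.uIcc_subset_Icc hy hx))
    have hI2 : (∫ s in y..x, f' s) ^ 2 ≤ (b - a) * K := by
      calc (∫ s in y..x, f' s) ^ 2 = |∫ s in y..x, f' s| ^ 2 := (sq_abs _).symm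
        _ ≤ (∫ s in Set.Icc a b, |f' s|) ^ 2 := pow_le_pow_left₀ (abs_nonneg _) h2 2
        _ ≤ (b - a) * K := hCS
    have hfx : f x = f y + (∫ s in y..x, f' s) := by linarith
    rw [hfx]
    nlinarith [sq_nonneg (f y - (∫ s in y..x, f' s)), hI2]
  -- integrate over y with respect to μ
  have hfsq : IntegrableOn (fun y => f y ^ 2) (Set.Icc a b) μ := hf.integrable_sq
  have hmono : ∫ _ in Set.Icc a b, f x ^ 2 ∂μ
      ≤ ∫ y in Set.Icc a b, (2 * (b - a) * K + 2 * f y ^ 2) ∂μ := by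
    refine setIntegral_mono_on (integrableOn_const (measure_lt_top μ _).ne)
      ?_ measurableSet_Icc hpt
    exact (integrableOn_const (measure_lt_top μ _).ne).add (hfsq.const_mul 2)
  rw [setIntegral_const, smul_eq_mul, measureReal_def, ← hM] at hmono
  have hrhs : ∫ y in Set.Icc a b, (2 * (b - a) * K + 2 * f y ^ 2) ∂μ
      = M * (2 * (b - a) * K) + 2 * L := by
    rw [integral_add (by exact integrableOn_const (measure_lt_top μ _).ne :
        IntegrableOn (fun _ : ℝ => 2 * (b - a) * K) (Set.Icc a b) μ)
      (hfsq.const_mul 2), setIntegral_const, smul_eq_mul, measureReal_def, ← hM, integral_const_mul, hLdef]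
  rw [hrhs] at hmono
  -- conclude
  have hMinv : M⁻¹ * M = 1 := inv_mul_cancel₀ hμpos.ne'
  nlinarith [mul_le_mul_of_nonneg_left hmono (inv_nonneg.2 hμpos.le),
    mul_nonneg (inv_nonneg.2 hμpos.le) hL0, mul_nonneg (mul_nonneg (by linarith : (0:ℝ) ≤ b - a) (inv_nonneg.2 hμpos.le)) hL0]
end

section
/- (Duality characterization of quadratic entropy) Let X be a measurable space, μ a nonnegative σ-finite Borel measure, and f, g : X → ℝ measurable with g > 0 μ-a.e. Then ∫_X (1/2)·f(x)²/g(x) dμ(x) = sup over bounded measurable b : X → ℝ of ∫_X [−(b(x)²/2)·g(x) + b(x)·f(x)] dμ(x). -/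
open MeasureTheory Real Filter

lemma clamp_sq_le (t n : ℝ) (hn : 0 ≤ n) :
    (max (-n) (min n t)) ^ 2 ≤ (max (-n) (min n t)) * t := by
  rcases le_total t (-n) with h | h
  · have h1 : min n t = t := min_eq_right (by linarith)
    have h2 : max (-n) (min n t) = -n := by rw [h1, max_eq_left h]
    rw [h2]; nlinarith
  · rcases le_total n t with h2 | h2
    · have h1 : min n t = n := min_eq_left h2
      have h3 : max (-n) (min n t) = n := by rw [h1, max_eq_right (by linarith)]
      rw [h3]; nlinarith
    · have h1 : min n t = t := min_eq_right h2
      have h3 : max (-n) (min n t) = t := by rw [h1, max_eq_right h]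
      rw [h3]; nlinarith

theorem quadratic_entropy_duality
    {X : Type*} [MeasurableSpace X] (μ : Measure X) [SigmaFinite μ]
    (f g : X → ℝ) (hf : Measurable f) (hg : Measurable g)
    (hgpos : ∀ᵐ x ∂μ, 0 < g x)
    (hint : Integrable (fun x => f x ^ 2 / g x) μ)
    (hfint : Integrable f μ) (hgint : Integrable g μ) :
    IsLUB
      {r : ℝ | ∃ b : X → ℝ, Measurable b ∧ (∃ M : ℝ, ∀ x, |b x| ≤ M) ∧
        r = ∫ x, (-(b x ^ 2 / 2) * g x + b x * f x) ∂μ}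
      (∫ x, (1 / 2) * (f x ^ 2 / g x) ∂μ) := by
  have hint2 : Integrable (fun x => (1 / 2) * (f x ^ 2 / g x)) μ := hint.const_mul _
  constructor
  · rintro r ⟨b, hb, ⟨M, hM⟩, rfl⟩
    have hib : Integrable (fun x => -(b x ^ 2 / 2) * g x + b x * f x) μ := by
      apply Integrable.add
      · apply hgint.bdd_mul (c := M ^ 2 / 2) (((hb.pow_const 2).div_const 2).neg.aestronglyMeasurable)
        refine Eventually.of_forall fun x => ?_
        have h1 := abs_le.mp (hM x)
        have h2 : b x ^ 2 ≤ M ^ 2 := by nlinarith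
        rw [Real.norm_eq_abs, Pi.neg_apply, abs_neg, abs_of_nonneg (by positivity)]
        linarith
      · exact hfint.bdd_mul (c := M) hb.aestronglyMeasurable (Eventually.of_forall fun x => by
          rw [Real.norm_eq_abs]; exact hM x)
    apply integral_mono_ae hib hint2
    filter_upwards [hgpos] with x hx
    have key : (1 / 2) * (f x ^ 2 / g x) - (-(b x ^ 2 / 2) * g x + b x * f x)
        = (f x - b x * g x) ^ 2 / (2 * g x) := by
      field_simp
      ring
    have h0 : (0:ℝ) ≤ (f x - b x * g x) ^ 2 / (2 * g x) :=
      div_nonneg (sq_nonneg _) (by linarith)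
    linarith
  · intro c hc
    set t : X → ℝ := fun x => f x / g x with ht
    set B : ℕ → X → ℝ := fun n x => max (-(n : ℝ)) (min n (t x)) with hB
    have hBm : ∀ n : ℕ, Measurable (B n) := fun n =>
      measurable_const.max (measurable_const.min (hf.div hg))
    have hBbd : ∀ n : ℕ, ∀ x, |B n x| ≤ n := by
      intro n x
      refine abs_le.mpr ⟨le_max_left _ _, max_le (neg_le_self n.cast_nonneg) (min_le_left _ _)⟩
    have key : ∀ n : ℕ, (∫ x, (-(B n x ^ 2 / 2) * g x + B n x * f x) ∂μ) ≤ c := fun n =>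
      hc ⟨B n, hBm n, ⟨n, hBbd n⟩, rfl⟩
    have hconv : Tendsto (fun n : ℕ => ∫ x, (-(B n x ^ 2 / 2) * g x + B n x * f x) ∂μ)
        atTop (nhds (∫ x, (1 / 2) * (f x ^ 2 / g x) ∂μ)) := by
      apply tendsto_integral_of_dominated_convergence (fun x => (1 / 2) * (f x ^ 2 / g x))
      · intro n
        exact ((((hBm n).pow_const 2).div_const 2).neg.mul hg |>.add
          ((hBm n).mul hf)).aestronglyMeasurable
      · exact hint2
      · intro n
        filter_upwards [hgpos] with x hx
        have h1 : (B n x) ^ 2 ≤ (B n x) * t x := clamp_sq_le (t x) n n.cast_nonneg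
        have hfx : t x * g x = f x := div_mul_cancel₀ _ hx.ne'
        have hf2 : f x ^ 2 / g x = t x ^ 2 * g x := by
          field_simp [ht]
          rw [← hfx]; ring
        have hpos : 0 ≤ -(B n x ^ 2 / 2) * g x + B n x * f x := by
          rw [← hfx]; nlinarith [sq_nonneg (B n x), hx.le]
        rw [Real.norm_eq_abs, abs_of_nonneg hpos, hf2, ← hfx]
        nlinarith [mul_nonneg hx.le (sq_nonneg (t x - B n x))]
      · filter_upwards [hgpos] with x hx
        have hev : ∀ᶠ n : ℕ in atTop,
            (-(B n x ^ 2 / 2) * g x + B n x * f x) = (1 / 2) * (f x ^ 2 / g x) := by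
          filter_upwards [eventually_ge_atTop ⌈|t x|⌉₊] with n hn
          have hn' : |t x| ≤ n := (Nat.le_ceil _).trans (Nat.cast_le.mpr hn)
          have h1 := abs_le.mp hn'
          have hb : B n x = t x := by
            simp only [hB]
            rw [min_eq_right h1.2, max_eq_right h1.1]
          rw [hb]
          have hg0 : g x ≠ 0 := hx.ne'
          field_simp [ht]
          have hfx : t x * g x = f x := div_mul_cancel₀ _ hg0
          rw [← hfx]; ring
        exact tendsto_const_nhds.congr' (hev.mono fun n h => h.symm)
    exact le_of_tendsto hconv (Eventually.of_forall key)
end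

section
/- For each j > 0 and z > 0, the function u(y) = (1/2 − y)·(j·(y + 1/2) + z·(1/2 − y)) on [−1/2, 1/2] satisfies u(−1/2) = z, u(1/2) = 0, u(y) > 0 for y ∈ (−1/2, 1/2), and (1/4)·∫_{−1/2}^{1/2} (j + u′(y))²/u(y) dy = S(j|z) = j·log(j/z) − j + z. -/
open MeasureTheory Real intervalIntegral

theorem optimal_u_properties (j z : ℝ) (hj : 0 < j) (hz : 0 < z) :
    let u : ℝ → ℝ := fun y => (1 / 2 - y) * (j * (y + 1 / 2) + z * (1 / 2 - y))
    u (-(1 / 2)) = z ∧ u (1 / 2) = 0 ∧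
      (∀ y ∈ Set.Ioo (-(1 / 2) : ℝ) (1 / 2), 0 < u y) ∧
      (1 / 4) * ∫ y in (-(1 / 2) : ℝ)..(1 / 2), (j + deriv u y) ^ 2 / u y
        = j * Real.log (j / z) - j + z := by
  intro u
  -- derivative of u
  have hd : ∀ y : ℝ, HasDerivAt u ((j - z) * (1 - 2 * y) - j) y := by
    intro y
    have h1 : HasDerivAt (fun y : ℝ => 1 / 2 - y) (-1) y := by
      simpa using (hasDerivAt_id y).const_sub (1 / 2 : ℝ)
    have h2 : HasDerivAt (fun y : ℝ => j * (y + 1 / 2) + z * (1 / 2 - y)) (j * 1 + z * (-1)) y := by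
      exact (((hasDerivAt_id y).add_const (1 / 2 : ℝ)).const_mul j).add (h1.const_mul z)
    have := h1.mul h2
    refine this.congr_deriv ?_
    ring
  have hderiv : ∀ y : ℝ, j + deriv u y = (j - z) * (1 - 2 * y) := by
    intro y
    rw [(hd y).deriv]; ring
  -- positivity of f(y) = (j-z)*y + (j+z)/2 on the closed interval
  have hf : ∀ y ∈ Set.Icc (-(1 / 2) : ℝ) (1 / 2), 0 < (j - z) * y + (j + z) / 2 := by
    rintro y ⟨h1, h2⟩
    nlinarith [mul_nonneg hj.le (by linarith : (0:ℝ) ≤ y + 1 / 2),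
      mul_nonneg hz.le (by linarith : (0:ℝ) ≤ 1 / 2 - y),
      mul_pos hj hz]
  refine ⟨by norm_num [u], by norm_num [u], ?_, ?_⟩
  · rintro y ⟨h1, h2⟩
    have hb : 0 < 1 / 2 - y := by linarith
    have : 0 < j * (y + 1 / 2) + z * (1 / 2 - y) := by
      have := mul_pos hj (by linarith : (0:ℝ) < y + 1 / 2)
      have := mul_pos hz hb
      linarith
    exact mul_pos hb this
  -- the integral
  · have huIcc : Set.uIcc (-(1 / 2) : ℝ) (1 / 2) = Set.Icc (-(1 / 2) : ℝ) (1 / 2) :=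
      Set.uIcc_of_le (by norm_num)
    set g : ℝ → ℝ := fun y => -4 * (j - z) + 4 * j * ((j - z) / ((j - z) * y + (j + z) / 2))
      with hg
    have hcong : ∀ y ∈ Set.uIcc (-(1 / 2) : ℝ) (1 / 2),
        (j + deriv u y) ^ 2 / u y = g y := by
      intro y hy
      rw [huIcc] at hy
      have hfy := hf y hy
      rcases eq_or_lt_of_le hy.2 with h | h
      · -- y = 1/2
        subst h
        have hu0 : u (1/2) = 0 := by norm_num [u]
        rw [hderiv, hu0]
        simp only [hg]
        rw [show (j - z) * (1/2:ℝ) + (j + z) / 2 = j from by ring]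
        norm_num
        field_simp
        ring
      · have hb : 0 < 1 / 2 - y := by linarith
        have hub : u y = (1 / 2 - y) * ((j - z) * y + (j + z) / 2) := by
          simp only [u]; ring
        rw [hderiv, hub, div_eq_iff (mul_pos hb hfy).ne']
        simp only [hg]
        have hfc : (j - z) / ((j - z) * y + (j + z) / 2) * ((j - z) * y + (j + z) / 2)
            = j - z := div_mul_cancel₀ _ hfy.ne'
        linear_combination (-(4 * j * (1 / 2 - y))) * hfc
    rw [intervalIntegral.integral_congr hcong]
    -- antiderivative
    set G : ℝ → ℝ := fun y => -4 * (j - z) * y + 4 * j * Real.log ((j - z) * y + (j + z) / 2)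
      with hG
    have hGd : ∀ y ∈ Set.uIcc (-(1 / 2) : ℝ) (1 / 2), HasDerivAt G (g y) y := by
      intro y hy
      rw [huIcc] at hy
      have hfy := hf y hy
      have hlin : HasDerivAt (fun y : ℝ => (j - z) * y + (j + z) / 2) (j - z) y := by
        simpa using ((hasDerivAt_id y).const_mul (j - z)).add_const ((j + z) / 2)
      have hlog := hlin.log hfy.ne'
      have h1 : HasDerivAt (fun y : ℝ => -4 * (j - z) * y) (-4 * (j - z)) y := by
        simpa using (hasDerivAt_id y).const_mul (-4 * (j - z))
      have h2 := h1.add (hlog.const_mul (4 * j))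
      exact h2
    have hgint : IntervalIntegrable g volume (-(1 / 2) : ℝ) (1 / 2) := by
      apply ContinuousOn.intervalIntegrable
      rw [huIcc]
      apply ContinuousOn.add continuousOn_const
      apply ContinuousOn.mul continuousOn_const
      apply ContinuousOn.div continuousOn_const
      · exact (continuousOn_const.mul continuousOn_id).add continuousOn_const
      · exact fun y hy => (hf y hy).ne'
    rw [intervalIntegral.integral_eq_sub_of_hasDerivAt hGd hgint]
    have e1 : ((j - z) * (1 / 2) + (j + z) / 2) = j := by ring
    have e2 : ((j - z) * (-(1 / 2)) + (j + z) / 2) = z := by ring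
    rw [hG]
    simp only [e1, e2]
    rw [Real.log_div hj.ne' hz.ne']
    ring
end

section
/- (Variational characterization of S) For j > 0 and z > 0, S(j|z) = (1/4)·inf ∫_{−1/2}^{1/2} (j + u′(y))²/u(y) dy, where the infimum is over smooth functions u : [−1/2, 1/2] → [0,∞) with u(−1/2) = z, u(1/2) = 0, and u(y) > 0 for y ∈ (−1/2, 1/2). The infimum is attained by the polynomial u(y) = (1/2 − y)·(j·(y + 1/2) + z·(1/2 − y)). -/
open MeasureTheory Real intervalIntegral

private lemma Dpos (j z y : ℝ) (hj : 0 < j) (hz : 0 < z) (h1 : -(1/2) ≤ y) (h2 : y ≤ 1/2) :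
    0 < z + (j - z) * (y + 1/2) := by
  rcases le_or_gt y 0 with h | h
  · nlinarith [mul_nonneg hj.le (show (0:ℝ) ≤ y + 1/2 by linarith)]
  · nlinarith [mul_nonneg hz.le (show (0:ℝ) ≤ 1/2 - y by linarith)]

private lemma hasDerivAt_u0 (j z y : ℝ) :
    HasDerivAt (fun y : ℝ => (1 / 2 - y) * (j * (y + 1 / 2) + z * (1 / 2 - y)))
      ((-1) * (j * (y + 1 / 2) + z * (1 / 2 - y)) + (1 / 2 - y) * (j - z)) y := by
  have h1 : HasDerivAt (fun y : ℝ => 1 / 2 - y) (-1) y := by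
    simpa using (hasDerivAt_id y).const_sub (1/2 : ℝ)
  have h2 : HasDerivAt (fun y : ℝ => j * (y + 1 / 2) + z * (1 / 2 - y)) (j - z) y := by
    have := (((hasDerivAt_id y).add_const (1/2 : ℝ)).const_mul j).add
      (((hasDerivAt_id y).const_sub (1/2 : ℝ)).const_mul z)
    refine this.congr_deriv ?_
    ring
  exact h1.mul h2

private lemma integrand_eq (j z : ℝ) (hj : 0 < j) (hz : 0 < z) :
    Set.EqOn
      (fun y => (j + deriv (fun y : ℝ => (1/2 - y) * (j * (y + 1/2) + z * (1/2 - y))) y) ^ 2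
        / ((1/2 - y) * (j * (y + 1/2) + z * (1/2 - y))))
      (fun y => 4 * (j - z)^2 * (1/2 - y) / (z + (j - z) * (y + 1/2)))
      (Set.uIcc (-(1/2)) (1/2)) := by
  intro y hy
  rw [Set.uIcc_of_le (by norm_num)] at hy
  have hD : 0 < z + (j - z) * (y + 1/2) := Dpos j z y hj hz hy.1 hy.2
  have hderiv : deriv (fun y : ℝ => (1/2 - y) * (j * (y + 1/2) + z * (1/2 - y))) y
      = (-1) * (j * (y + 1/2) + z * (1/2 - y)) + (1/2 - y) * (j - z) :=
    (hasDerivAt_u0 j z y).deriv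
  simp only [hderiv]
  rcases eq_or_lt_of_le hy.2 with h | h
  · rw [← h]; norm_num
  · have h2 : (0:ℝ) < 1/2 - y := by linarith
    have h3 : j * (y + 1/2) + z * (1/2 - y) = z + (j - z) * (y + 1/2) := by ring
    rw [h3, div_eq_div_iff (mul_pos h2 hD).ne' hD.ne']
    ring

private lemma hasDerivAt_D (j z y : ℝ) :
    HasDerivAt (fun y : ℝ => z + (j - z) * (y + 1/2)) (j - z) y := by
  simpa using (((hasDerivAt_id y).add_const (1/2 : ℝ)).const_mul (j - z)).const_add z

private lemma g_cont (j z : ℝ) (hj : 0 < j) (hz : 0 < z) :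
    ContinuousOn (fun y => 4 * (j - z)^2 * (1/2 - y) / (z + (j - z) * (y + 1/2)))
      (Set.uIcc (-(1/2) : ℝ) (1/2)) := by
  apply ContinuousOn.div (by fun_prop) (by fun_prop)
  intro y hy
  rw [Set.uIcc_of_le (by norm_num)] at hy
  exact (Dpos j z y hj hz hy.1 hy.2).ne'

private lemma g_integral (j z : ℝ) (hj : 0 < j) (hz : 0 < z) :
    (∫ y in (-(1/2) : ℝ)..(1/2), 4 * (j - z)^2 * (1/2 - y) / (z + (j - z) * (y + 1/2)))
      = 4 * j * Real.log (j / z) - 4 * (j - z) := by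
  have hg : ∀ y ∈ Set.uIcc (-(1/2) : ℝ) (1/2),
      HasDerivAt (fun y => 4 * j * Real.log (z + (j - z) * (y + 1/2)) - 4 * (j - z) * y)
        (4 * (j - z)^2 * (1/2 - y) / (z + (j - z) * (y + 1/2))) y := by
    intro y hy
    rw [Set.uIcc_of_le (by norm_num)] at hy
    have hD : 0 < z + (j - z) * (y + 1/2) := Dpos j z y hj hz hy.1 hy.2
    have hlog := ((hasDerivAt_D j z y).log hD.ne').const_mul (4 * j)
    have hlin : HasDerivAt (fun y : ℝ => 4 * (j - z) * y) (4 * (j - z)) y := by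
      simpa using (hasDerivAt_id y).const_mul (4 * (j - z))
    refine (hlog.sub hlin).congr_deriv ?_
    symm
    rw [div_eq_iff hD.ne', sub_mul, mul_assoc (4*j), div_mul_cancel₀ _ hD.ne']
    ring
  rw [intervalIntegral.integral_eq_sub_of_hasDerivAt hg ((g_cont j z hj hz).intervalIntegrable)]
  have e1 : z + (j - z) * ((1:ℝ)/2 + 1/2) = j := by ring
  have e2 : z + (j - z) * (-(1:ℝ)/2 + 1/2) = z := by ring
  rw [Real.log_div hj.ne' hz.ne']
  rw [show z + (j - z) * ((1:ℝ)/2 + 1/2) = j from by ring,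
      show z + (j - z) * (-((1:ℝ)/2) + 1/2) = z from by ring]
  ring

private lemma lower_bound (j z : ℝ) (hj : 0 < j) (hz : 0 < z) (u : ℝ → ℝ)
    (hu : ContDiff ℝ (⊤ : ℕ∞) u) (hb0 : u (-(1/2)) = z) (hb1 : u (1/2) = 0)
    (hpos : ∀ y ∈ Set.Ioo (-(1/2) : ℝ) (1/2), 0 < u y)
    (hint : IntervalIntegrable (fun y => (j + deriv u y) ^ 2 / u y) volume (-(1/2)) (1/2)) :
    j * Real.log (j / z) - j + z
      ≤ (1/4) * ∫ y in (-(1/2) : ℝ)..(1/2), (j + deriv u y) ^ 2 / u y := by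
  have hucont : Continuous u := hu.continuous
  have hu' : Continuous (deriv u) := hu.continuous_deriv (by simp)
  have hudiff : Differentiable ℝ u := hu.differentiable (by simp)
  have hDne : ∀ y ∈ Set.Icc (-(1/2) : ℝ) (1/2), (z + (j - z) * (y + 1/2)) ≠ 0 := fun y hy =>
    (Dpos j z y hj hz hy.1 hy.2).ne'
  have huIcc : Set.uIcc (-(1/2) : ℝ) (1/2) = Set.Icc (-(1/2) : ℝ) (1/2) :=
    Set.uIcc_of_le (by norm_num)
  have hccont : ContinuousOn (fun y => 2 * (j - z) / (z + (j - z) * (y + 1/2)))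
      (Set.uIcc (-(1/2) : ℝ) (1/2)) := by
    rw [huIcc]
    exact ContinuousOn.div (by fun_prop) (by fun_prop) hDne
  have hhcont : ContinuousOn
      (fun y => 2 * (2 * (j - z) / (z + (j - z) * (y + 1/2))) * (j + deriv u y)
        - (2 * (j - z) / (z + (j - z) * (y + 1/2)))^2 * u y)
      (Set.uIcc (-(1/2) : ℝ) (1/2)) := by
    apply ContinuousOn.sub
    · exact (continuousOn_const.mul hccont).mul (continuousOn_const.add hu'.continuousOn)
    · exact (hccont.pow 2).mul hucont.continuousOn
  have hhint : IntervalIntegrable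
      (fun y => 2 * (2 * (j - z) / (z + (j - z) * (y + 1/2))) * (j + deriv u y)
        - (2 * (j - z) / (z + (j - z) * (y + 1/2)))^2 * u y) volume (-(1/2)) (1/2) :=
    hhcont.intervalIntegrable
  -- FTC for h
  have hftc : ∀ y ∈ Set.uIcc (-(1/2) : ℝ) (1/2),
      HasDerivAt
        (fun y => 4 * j * Real.log (z + (j - z) * (y + 1/2))
          + 2 * (2 * (j - z) / (z + (j - z) * (y + 1/2))) * u y)
        (2 * (2 * (j - z) / (z + (j - z) * (y + 1/2))) * (j + deriv u y)
          - (2 * (j - z) / (z + (j - z) * (y + 1/2)))^2 * u y) y := by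
    intro y hy
    rw [huIcc] at hy
    have hD : 0 < z + (j - z) * (y + 1/2) := Dpos j z y hj hz hy.1 hy.2
    have hlog := ((hasDerivAt_D j z y).log hD.ne').const_mul (4 * j)
    have hcd : HasDerivAt (fun y => 2 * (j - z) / (z + (j - z) * (y + 1/2)))
        ((0 * (z + (j - z) * (y + 1/2)) - 2 * (j - z) * (j - z)) / (z + (j - z) * (y + 1/2))^2)
        y := (hasDerivAt_const y (2 * (j - z))).div (hasDerivAt_D j z y) hD.ne'
    have hcu := (hcd.const_mul 2).mul (hudiff y).hasDerivAt
    refine (hlog.add hcu).congr_deriv ?_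
    symm
    generalize hDy : z + (j - z) * (y + 1/2) = D at hD ⊢
    field_simp
    ring
  have hIeq := intervalIntegral.integral_eq_sub_of_hasDerivAt hftc hhint
  rw [hb0, hb1] at hIeq
  have hIval : (∫ y in (-(1/2) : ℝ)..(1/2),
      (2 * (2 * (j - z) / (z + (j - z) * (y + 1/2))) * (j + deriv u y)
        - (2 * (j - z) / (z + (j - z) * (y + 1/2)))^2 * u y))
      = 4 * j * Real.log (j / z) - 4 * (j - z) := by
    rw [hIeq, Real.log_div hj.ne' hz.ne',
      show z + (j - z) * ((1:ℝ)/2 + 1/2) = j from by ring,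
      show z + (j - z) * (-((1:ℝ)/2) + 1/2) = z from by ring]
    field_simp
    ring
  -- pointwise a.e. inequality
  have hres : volume.restrict (Set.Icc (-(1/2) : ℝ) (1/2))
      = volume.restrict (Set.Ioo (-(1/2) : ℝ) (1/2)) :=
    (Measure.restrict_congr_set MeasureTheory.Ioo_ae_eq_Icc).symm
  have hae : (fun y => 2 * (2 * (j - z) / (z + (j - z) * (y + 1/2))) * (j + deriv u y)
        - (2 * (j - z) / (z + (j - z) * (y + 1/2)))^2 * u y)
      ≤ᵐ[volume.restrict (Set.Icc (-(1/2) : ℝ) (1/2))]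
      fun y => (j + deriv u y) ^ 2 / u y := by
    rw [hres]
    filter_upwards [ae_restrict_mem measurableSet_Ioo] with y hy
    have hup : 0 < u y := hpos y hy
    rw [le_div_iff₀ hup]
    nlinarith [sq_nonneg (j + deriv u y - 2 * (j - z) / (z + (j - z) * (y + 1/2)) * u y), sq_nonneg (u y)]
  have hmono := intervalIntegral.integral_mono_ae_restrict (by norm_num) hhint hint hae
  rw [hIval] at hmono
  linarith


/-- Variational characterization of `S(j|z) = j log(j/z) − j + z`: it is the least
value of `(1/4)∫ (j+u')²/u` over smooth nonnegative `u` with `u(−1/2) = z`,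
`u(1/2) = 0`, `u > 0` on the interior, and finite energy; the minimum is attained
by the quadratic polynomial `u₀(y) = (1/2 − y)(j(y+1/2) + z(1/2 − y))`. -/
theorem S_variational (j z : ℝ) (hj : 0 < j) (hz : 0 < z) :
    IsLeast
      {r : ℝ | ∃ u : ℝ → ℝ, ContDiff ℝ (⊤ : ℕ∞) u ∧
        u (-(1 / 2)) = z ∧ u (1 / 2) = 0 ∧
        (∀ y ∈ Set.Icc (-(1 / 2) : ℝ) (1 / 2), 0 ≤ u y) ∧
        (∀ y ∈ Set.Ioo (-(1 / 2) : ℝ) (1 / 2), 0 < u y) ∧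
        IntervalIntegrable (fun y => (j + deriv u y) ^ 2 / u y) volume (-(1 / 2)) (1 / 2) ∧
        r = (1 / 4) * ∫ y in (-(1 / 2) : ℝ)..(1 / 2), (j + deriv u y) ^ 2 / u y}
      (j * Real.log (j / z) - j + z) ∧
    (1 / 4) * (∫ y in (-(1 / 2) : ℝ)..(1 / 2),
        (j + deriv (fun y => (1 / 2 - y) * (j * (y + 1 / 2) + z * (1 / 2 - y))) y) ^ 2
          / ((1 / 2 - y) * (j * (y + 1 / 2) + z * (1 / 2 - y))))
      = j * Real.log (j / z) - j + z := by
  have hval : (1 / 4) * (∫ y in (-(1 / 2) : ℝ)..(1 / 2),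
        (j + deriv (fun y => (1 / 2 - y) * (j * (y + 1 / 2) + z * (1 / 2 - y))) y) ^ 2
          / ((1 / 2 - y) * (j * (y + 1 / 2) + z * (1 / 2 - y))))
      = j * Real.log (j / z) - j + z := by
    rw [intervalIntegral.integral_congr (integrand_eq j z hj hz), g_integral j z hj hz]
    rw [Real.log_div hj.ne' hz.ne']
    ring
  refine ⟨⟨?_, ?_⟩, hval⟩
  · refine ⟨fun y => (1 / 2 - y) * (j * (y + 1 / 2) + z * (1 / 2 - y)), ?_, by norm_num,
      by norm_num, ?_, ?_, ?_, hval.symm ▸ ?_⟩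
    · fun_prop
    · intro y hy
      have h1 : (0:ℝ) ≤ 1 / 2 - y := by linarith [hy.2]
      have h2 : (0:ℝ) ≤ j * (y + 1 / 2) + z * (1 / 2 - y) := by
        have := mul_nonneg hj.le (show (0:ℝ) ≤ y + 1/2 by linarith [hy.1])
        have := mul_nonneg hz.le h1
        linarith
      exact mul_nonneg h1 h2
    · intro y hy
      have h1 : (0:ℝ) < 1 / 2 - y := by linarith [hy.2]
      have h2 : (0:ℝ) < j * (y + 1 / 2) + z * (1 / 2 - y) := by
        have := mul_pos hj (show (0:ℝ) < y + 1/2 by linarith [hy.1])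
        have := mul_pos hz h1
        linarith
      exact mul_pos h1 h2
    · exact ((g_cont j z hj hz).congr (integrand_eq j z hj hz)).intervalIntegrable
    · rfl
  · rintro r ⟨u, hu, hb0, hb1, _, hpos, hint, rfl⟩
    exact lower_bound j z hj hz u hu hb0 hb1 hpos hint
end

section
/- If j < 0, z > 0, and u : [−1/2, 1/2] → [0,∞) is smooth with u(−1/2) = z, u(1/2) = 0, and u > 0 on (−1/2, 1/2), then limsup as a → 1/2⁻ of ∫_{−1/2}^a (j + u′(y))²/u(y) dy = +∞. -/
open MeasureTheory Real Filter intervalIntegral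

/-- For negative flux `j < 0` the energy integral diverges as the upper limit
approaches `1/2`: since the integrand is nonnegative, the integral is monotone in
the upper limit and "limsup = +∞" is expressed as divergence to `atTop`. -/
theorem negative_flux_diverges (j z : ℝ) (hj : j < 0) (hz : 0 < z)
    (u : ℝ → ℝ) (hu : ContDiffOn ℝ (⊤ : ℕ∞) u (Set.Icc (-(1 / 2) : ℝ) (1 / 2)))
    (hnonneg : ∀ y ∈ Set.Icc (-(1 / 2) : ℝ) (1 / 2), 0 ≤ u y)
    (hleft : u (-(1 / 2)) = z) (hright : u (1 / 2) = 0)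
    (hupos : ∀ y ∈ Set.Ioo (-(1 / 2) : ℝ) (1 / 2), 0 < u y) :
    Tendsto (fun a => ∫ y in (-(1 / 2) : ℝ)..a, (j + deriv u y) ^ 2 / u y)
      (nhdsWithin (1 / 2 : ℝ) (Set.Iio (1 / 2))) atTop := by
  set I : Set ℝ := Set.Icc (-(1 / 2) : ℝ) (1 / 2) with hI
  set v : ℝ → ℝ := derivWithin u I with hv
  have hhalf : (-(1/2) : ℝ) < 1/2 := by norm_num
  have hvcont : ContinuousOn v I :=
    hu.continuousOn_derivWithin (uniqueDiffOn_Icc hhalf) (by simp)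
  have hvd : ∀ x ∈ Set.Ioo (-(1 / 2) : ℝ) (1 / 2), HasDerivAt u (v x) x := by
    intro x hx
    have hd : DifferentiableWithinAt ℝ u I x :=
      (hu.differentiableOn (by simp)) x (Set.Ioo_subset_Icc_self hx)
    have hmem : I ∈ nhds x := Icc_mem_nhds hx.1 hx.2
    exact (hd.hasDerivWithinAt).hasDerivAt hmem
  have hderiv_eq : ∀ x ∈ Set.Ioo (-(1 / 2) : ℝ) (1 / 2), deriv u x = v x :=
    fun x hx => (hvd x hx).deriv
  -- main lower bound for a ∈ Ioo
  have key : ∀ a ∈ Set.Ioo (-(1 / 2) : ℝ) (1 / 2),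
      4 * j * Real.log (u a) - 4 * j * Real.log z ≤
        ∫ y in (-(1 / 2) : ℝ)..a, (j + deriv u y) ^ 2 / u y := by
    intro a ha
    set b : ℝ := -(1/2) with hb
    have hba : b ≤ a := ha.1.le
    have hsub : Set.Icc b a ⊆ I := Set.Icc_subset_Icc le_rfl ha.2.le
    have hpos : ∀ y ∈ Set.Icc b a, 0 < u y := by
      intro y hy
      rcases eq_or_lt_of_le hy.1 with h | h
      · rw [← h, hleft]; exact hz
      · exact hupos y ⟨h, lt_of_le_of_lt hy.2 ha.2⟩
    have hucont : ContinuousOn u (Set.Icc b a) := hu.continuousOn.mono hsub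
    have hvcont' : ContinuousOn v (Set.Icc b a) := hvcont.mono hsub
    have hFcont : ContinuousOn (fun y => (j + v y) ^ 2 / u y) (Set.Icc b a) :=
      ((continuousOn_const.add hvcont').pow 2).div hucont (fun y hy => (hpos y hy).ne')
    have hGcont : ContinuousOn (fun y => (4 * j * v y) / u y) (Set.Icc b a) :=
      (continuousOn_const.mul hvcont').div hucont (fun y hy => (hpos y hy).ne')
    have hFint : IntervalIntegrable (fun y => (j + v y) ^ 2 / u y) volume b a := by
      apply hFcont.intervalIntegrable_of_Icc hba
    have hGint : IntervalIntegrable (fun y => (4 * j * v y) / u y) volume b a := by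
      apply hGcont.intervalIntegrable_of_Icc hba
    -- replace deriv by v in the integral
    have hcongr : (∫ y in b..a, (j + deriv u y) ^ 2 / u y)
        = ∫ y in b..a, (j + v y) ^ 2 / u y := by
      apply intervalIntegral.integral_congr_ae
      apply Filter.Eventually.of_forall
      intro x hx
      rw [Set.uIoc_of_le hba] at hx
      rw [hderiv_eq x ⟨hx.1, lt_of_le_of_lt hx.2 ha.2⟩]
    -- pointwise bound
    have hmono : (∫ y in b..a, (4 * j * v y) / u y) ≤ ∫ y in b..a, (j + v y) ^ 2 / u y := by
      apply intervalIntegral.integral_mono_on hba hGint hFint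
      intro x hx
      have h1 : 4 * j * v x ≤ (j + v x) ^ 2 := by nlinarith [sq_nonneg (j - v x)]
      exact div_le_div_of_nonneg_right h1 (hpos x hx).le
    -- FTC for log ∘ u
    have hlog : (∫ y in b..a, v y / u y) = Real.log (u a) - Real.log (u b) := by
      apply intervalIntegral.integral_eq_sub_of_hasDeriv_right_of_le hba
      · exact Real.continuousOn_log.comp hucont
          (fun y hy => (hpos y hy).ne')
      · intro x hx
        have hx' : x ∈ Set.Ioo (-(1 / 2) : ℝ) (1 / 2) := ⟨hx.1, lt_of_lt_of_le hx.2 ha.2.le⟩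
        have := ((hvd x hx').log (hpos x (Set.Ioo_subset_Icc_self hx)).ne')
        exact this.hasDerivWithinAt
      · exact ContinuousOn.intervalIntegrable_of_Icc hba
          (hvcont'.div hucont (fun y hy => (hpos y hy).ne'))
    have hGval : (∫ y in b..a, (4 * j * v y) / u y)
        = 4 * j * Real.log (u a) - 4 * j * Real.log z := by
      have : (∫ y in b..a, (4 * j * v y) / u y) = 4 * j * ∫ y in b..a, v y / u y := by
        rw [← intervalIntegral.integral_const_mul]
        congr 1; ext y; ring
      rw [this, hlog, hb, hleft]; ring
    rw [hcongr, ← hGval]; exact hmono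
  -- the lower bound tends to atTop
  have hIoo : Set.Ioo (-(1 / 2) : ℝ) (1 / 2) ∈ nhdsWithin (1/2 : ℝ) (Set.Iio (1/2)) :=
    Ioo_mem_nhdsLT_of_mem ⟨hhalf, le_rfl⟩
  have hulim : Tendsto u (nhdsWithin (1/2 : ℝ) (Set.Iio (1/2))) (nhdsWithin 0 (Set.Ioi 0)) := by
    rw [← nhdsWithin_Ioo_eq_nhdsLT hhalf]
    rw [tendsto_nhdsWithin_iff]
    constructor
    · have : ContinuousWithinAt u I (1/2) :=
        hu.continuousOn (1/2) (Set.right_mem_Icc.2 hhalf.le)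
      have h2 := this.mono (Set.Ioo_subset_Icc_self)
      rw [ContinuousWithinAt, hright] at h2
      exact h2
    · exact Filter.eventually_of_mem self_mem_nhdsWithin (fun x hx => hupos x hx)
  have hloglim : Tendsto (fun a => Real.log (u a)) (nhdsWithin (1/2 : ℝ) (Set.Iio (1/2))) atBot :=
    Real.tendsto_log_nhdsGT_zero.comp hulim
  have hbound : Tendsto (fun a => 4 * j * Real.log (u a) - 4 * j * Real.log z)
      (nhdsWithin (1/2 : ℝ) (Set.Iio (1/2))) atTop := by
    apply tendsto_atTop_add_const_right
    exact Tendsto.const_mul_atBot_of_neg (by linarith : 4 * j < 0) hloglim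
  apply tendsto_atTop_mono' _ _ hbound
  filter_upwards [hIoo] with a ha
  exact key a ha
end

section
/- (Laplace's method, interior minimum) Let f : [a,b] → ℝ be twice continuously differentiable with a unique interior minimum at x_i ∈ (a,b), f(x_i) = inf f, f″(x_i) > 0, and f(x) > f(x_i) for x ≠ x_i. Then as n → ∞, ∫_a^b e^{−n f(x)} dx = (1 + o(1))·√(2π/(n f″(x_i)))·e^{−n f(x_i)}. -/
open MeasureTheory Real Filter Asymptotics intervalIntegral

lemma laplace_taylor_est {a b xi : ℝ} {f f1 f2 : ℝ → ℝ} (hxi : xi ∈ Set.Ioo a b)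
    (hd1 : ∀ x ∈ Set.Ioo a b, HasDerivAt f (f1 x) x)
    (hd2 : ∀ x ∈ Set.Ioo a b, HasDerivAt f1 (f2 x) x)
    (h10 : f1 xi = 0) (h2c : ContinuousAt f2 xi)
    {ε : ℝ} (hε : 0 < ε) :
    ∃ δ > 0, δ ≤ (xi - a)/2 ∧ δ ≤ (b - xi)/2 ∧
      ∀ h : ℝ, |h| ≤ δ → |f (xi + h) - f xi - f2 xi/2 * h^2| ≤ ε * h^2 := by
  obtain ⟨hax, hxb⟩ := hxi
  obtain ⟨δ₁, hδ₁, hcont⟩ := Metric.continuousAt_iff.1 h2c ε hε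
  set δ := min (δ₁/2) (min ((xi - a)/2) ((b - xi)/2)) with hδdef
  have hδpos : 0 < δ := by
    apply lt_min (by linarith) (lt_min (by linarith) (by linarith))
  have hδa : δ ≤ (xi - a)/2 := le_trans (min_le_right _ _) (min_le_left _ _)
  have hδb : δ ≤ (b - xi)/2 := le_trans (min_le_right _ _) (min_le_right _ _)
  have hδ1' : δ < δ₁ := lt_of_le_of_lt (min_le_left _ _) (by linarith)
  set D := Set.Icc (xi - δ) (xi + δ) with hDdef
  have hD : D ⊆ Set.Ioo a b := by
    intro x hx
    obtain ⟨h1, h2⟩ := hx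
    constructor <;> [linarith; linarith]
  have hxiD : xi ∈ D := by
    constructor <;> [linarith; linarith]
  -- step 1
  have step1 : ∀ x ∈ D, |f1 x - f2 xi * (x - xi)| ≤ ε * |x - xi| := by
    intro x hx
    have hmvt := (convex_Icc (xi - δ) (xi + δ)).norm_image_sub_le_of_norm_hasDerivWithin_le
      (f := fun y => f1 y - f2 xi * (y - xi)) (f' := fun y => f2 y - f2 xi) (C := ε)
      (fun y hy => by
        have := ((hd2 y (hD hy)).sub ((((hasDerivAt_id y).sub_const xi).const_mul (f2 xi))))
        rw [mul_one] at this; exact this.hasDerivWithinAt)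
      (fun y hy => by
        have hyd : dist y xi < δ₁ := by
          rw [Real.dist_eq]
          have h1 := hy.1; have h2 := hy.2
          have : |y - xi| ≤ δ := abs_le.2 ⟨by linarith, by linarith⟩
          linarith
        simpa [Real.norm_eq_abs, Real.dist_eq] using (hcont hyd).le)
      hxiD hx
    simpa [h10, Real.norm_eq_abs, abs_sub_comm] using hmvt
  refine ⟨δ, hδpos, hδa, hδb, ?_⟩
  intro h hh
  set x := xi + h with hxdef
  have hxD : x ∈ D := by
    have := abs_le.1 hh
    constructor <;> [simp [hxdef]; simp [hxdef]] <;> linarith [this.1, this.2]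
  have hmemD : Set.uIcc xi x ⊆ D := Set.ordConnected_Icc.uIcc_subset hxiD hxD
  have habs : ∀ t ∈ Set.uIcc xi x, |t - xi| ≤ |h| := by
    intro t ht
    rcases le_total xi x with hc | hc
    · rw [Set.uIcc_of_le hc] at ht
      have h1 := ht.1; have h2 := ht.2
      have : x - xi = h := by ring
      rw [abs_le]
      constructor <;> [linarith [neg_abs_le h, le_abs_self h]; linarith [le_abs_self h]]
    · rw [Set.uIcc_of_ge hc] at ht
      have h1 := ht.1; have h2 := ht.2
      rw [abs_le]
      constructor <;> [linarith [neg_abs_le h]; linarith [neg_abs_le h, le_abs_self h]]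
  have hmvt2 := (convex_uIcc xi x).norm_image_sub_le_of_norm_hasDerivWithin_le
    (f := fun t => f t - f xi - f2 xi/2 * (t - xi)^2)
    (f' := fun t => f1 t - f2 xi * (t - xi)) (C := ε * |h|)
    (fun t ht => by
      have hq : HasDerivAt (fun t => f2 xi/2 * (t - xi)^2) (f2 xi * (t - xi)) t := by
        have := (((hasDerivAt_id t).sub_const xi).pow 2).const_mul (f2 xi / 2)
        have e : f2 xi * (t - xi) = f2 xi / 2 * (((2:ℕ):ℝ) * (id t - xi) ^ (2 - 1) * 1) := by
          simp only [id_eq, mul_one, Nat.cast_ofNat, show (2:ℕ) - 1 = 1 from rfl, pow_one]; ring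
        rw [e]; exact this
      have := (((hd1 t (hD (hmemD ht))).sub_const (f xi)).sub hq)
      exact this.hasDerivWithinAt)
    (fun t ht => by
      have h1 := step1 t (hmemD ht)
      have h2 := habs t ht
      have : ε * |t - xi| ≤ ε * |h| := by nlinarith
      rw [Real.norm_eq_abs]
      linarith)
    (Set.left_mem_uIcc) (Set.right_mem_uIcc)
  have hx' : x - xi = h := by ring
  rw [Real.norm_eq_abs, Real.norm_eq_abs, hx'] at hmvt2
  simp only [sub_self] at hmvt2
  calc |f (xi + h) - f xi - f2 xi / 2 * h ^ 2| 
      ≤ ε * |h| * |h| := by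
        have : f x - f xi - f2 xi/2 * (x - xi)^2 - (f xi - f xi - f2 xi/2 * 0^2) 
            = f (xi + h) - f xi - f2 xi/2 * h^2 := by rw [hx']; simp [hxdef]
        rw [← this]
        convert hmvt2 using 2
        · simp [hx']
      _ = ε * h ^ 2 := by rw [mul_assoc, abs_mul_abs_self]; ring

set_option maxHeartbeats 1000000 in
/-- Laplace's method, interior minimum. -/
theorem laplace_interior (a b xi : ℝ) (hab : a < b) (f : ℝ → ℝ)
    (hf : ContDiffOn ℝ 2 f (Set.Icc a b))
    (hxi : xi ∈ Set.Ioo a b)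
    (hmin : ∀ x ∈ Set.Icc a b, x ≠ xi → f xi < f x)
    (hf'' : 0 < iteratedDerivWithin 2 f (Set.Icc a b) xi) :
    (fun n : ℕ => ∫ x in a..b, Real.exp (-(n : ℝ) * f x)) ~[atTop]
      (fun n : ℕ =>
        Real.sqrt (2 * Real.pi / ((n : ℝ) * iteratedDerivWithin 2 f (Set.Icc a b) xi))
          * Real.exp (-(n : ℝ) * f xi)) := by
  have hax := hxi.1
  have hxb := hxi.2
  have hxiIcc : xi ∈ Set.Icc a b := ⟨hax.le, hxb.le⟩
  have hs : UniqueDiffOn ℝ (Set.Icc a b) := uniqueDiffOn_Icc hab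
  set f1 := derivWithin f (Set.Icc a b) with hf1def
  set f2 := derivWithin f1 (Set.Icc a b) with hf2def
  have hf1 : ContDiffOn ℝ 1 f1 (Set.Icc a b) := hf.derivWithin hs (by norm_num)
  have hf2c : ContinuousOn f2 (Set.Icc a b) := by
    have h := hf1.derivWithin (m := 0) hs (by norm_num)
    exact contDiffOn_zero.mp h
  have hc2 : iteratedDerivWithin 2 f (Set.Icc a b) xi = f2 xi := by
    have h1 : iteratedDerivWithin 2 f (Set.Icc a b) xi
        = derivWithin (iteratedDerivWithin 1 f (Set.Icc a b)) (Set.Icc a b) xi :=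
      congrFun iteratedDerivWithin_succ xi
    rw [h1]
    exact derivWithin_congr (fun x hx => congrFun iteratedDerivWithin_one x)
      (congrFun iteratedDerivWithin_one xi)
  set c := f2 xi with hcdef
  have hcpos : 0 < c := hc2 ▸ hf''
  have hIccN : ∀ x ∈ Set.Ioo a b, Set.Icc a b ∈ nhds x := fun x hx =>
    Icc_mem_nhds hx.1 hx.2
  have hd1 : ∀ x ∈ Set.Ioo a b, HasDerivAt f (f1 x) x := by
    intro x hx
    have hdiff : DifferentiableAt ℝ f x :=
      (hf.differentiableOn (by norm_num)).differentiableAt (hIccN x hx)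
    have h : f1 x = deriv f x := derivWithin_of_mem_nhds (hIccN x hx)
    rw [h]; exact hdiff.hasDerivAt
  have hd2 : ∀ x ∈ Set.Ioo a b, HasDerivAt f1 (f2 x) x := by
    intro x hx
    have hdiff : DifferentiableAt ℝ f1 x :=
      (hf1.differentiableOn (by norm_num)).differentiableAt (hIccN x hx)
    have h : f2 x = deriv f1 x := derivWithin_of_mem_nhds (hIccN x hx)
    rw [h]; exact hdiff.hasDerivAt
  have h10 : f1 xi = 0 := by
    have hloc : IsLocalMin f xi := by
      filter_upwards [hIccN xi hxi] with x hx
      rcases eq_or_ne x xi with h | h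
      · rw [h]
      · exact (hmin x hx h).le
    exact hloc.hasDerivAt_eq_zero (hd1 xi hxi)
  have h2ca : ContinuousAt f2 xi := hf2c.continuousAt (hIccN xi hxi)
  have key : ∀ ε : ℝ, 0 < ε → ∃ δ > 0, δ ≤ (xi - a)/2 ∧ δ ≤ (b - xi)/2 ∧
      ∀ h : ℝ, |h| ≤ δ → |f (xi + h) - f xi - c/2 * h^2| ≤ ε * h^2 :=
    fun ε hε => laplace_taylor_est hxi hd1 hd2 h10 h2ca hε
  -- quadratic lower bound near xi
  obtain ⟨δ₀, hδ₀pos, hδ₀a, hδ₀b, hT⟩ := key (c/4) (by positivity)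
  have hlow : ∀ h : ℝ, |h| ≤ δ₀ → c/4 * h^2 ≤ f (xi + h) - f xi := by
    intro h hh
    have h1 := (abs_le.1 (hT h hh)).1
    nlinarith [sq_nonneg h]
  -- positive minimum away from xi
  set K := Set.Icc a b ∩ {x : ℝ | δ₀ ≤ |x - xi|} with hKdef
  have hKcl : IsClosed {x : ℝ | δ₀ ≤ |x - xi|} :=
    isClosed_le continuous_const ((continuous_id.sub continuous_const).abs)
  have hKco : IsCompact K := isCompact_Icc.inter_right hKcl
  have hKne : K.Nonempty := by
    refine ⟨a, ⟨le_refl a, hab.le⟩, ?_⟩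
    have : |a - xi| = xi - a := by rw [abs_sub_comm]; exact abs_of_nonneg (by linarith)
    simp only [Set.mem_setOf_eq, this]
    linarith
  have hfK : ContinuousOn f K := hf.continuousOn.mono Set.inter_subset_left
  obtain ⟨x₀, hx₀K, hx₀min⟩ := hKco.exists_isMinOn hKne hfK
  set m := f x₀ - f xi with hmdef
  have hm : 0 < m := by
    have hx₀ne : x₀ ≠ xi := by
      intro h
      have := hx₀K.2
      rw [h] at this
      simp only [Set.mem_setOf_eq, sub_self, abs_zero] at this
      linarith
    have := hmin x₀ hx₀K.1 hx₀ne
    simp only [hmdef]; linarith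
  have hKbound : ∀ x ∈ K, f xi + m ≤ f x := by
    intro x hx
    have := hx₀min hx
    simp only [Set.mem_setOf_eq] at this
    simp only [hmdef]; linarith
  set B := max (xi - a) (b - xi) with hBdef
  have hBpos : 0 < B := lt_max_of_lt_left (by linarith)
  -- the rescaled integrands
  set A : ℕ → ℝ := fun n => Real.sqrt n * (a - xi) with hAdef
  set Bn : ℕ → ℝ := fun n => Real.sqrt n * (b - xi) with hBndef
  set φ : ℕ → ℝ → ℝ :=
    fun n y => Real.exp (-(n:ℝ) * (f (xi + y / Real.sqrt n) - f xi)) with hφdef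
  set F : ℕ → ℝ → ℝ := fun n => (Set.Ioc (A n) (Bn n)).indicator (φ n) with hFdef
  have hmem : ∀ n : ℕ, ∀ y ∈ Set.Ioc (A n) (Bn n),
      1 ≤ n ∧ a - xi < y / Real.sqrt n ∧ y / Real.sqrt n ≤ b - xi := by
    intro n y hy
    rcases Nat.eq_zero_or_pos n with h0 | h1
    · exfalso
      have h1 := hy.1
      have h2 := hy.2
      simp only [hAdef, hBndef, h0, Nat.cast_zero, Real.sqrt_zero, zero_mul] at h1 h2
      linarith
    · have hsq : 0 < Real.sqrt n := Real.sqrt_pos.2 (by exact_mod_cast h1)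
      refine ⟨h1, ?_, ?_⟩
      · rw [lt_div_iff₀ hsq]
        have := hy.1
        simp only [hAdef] at this
        linarith [this]
      · rw [div_le_iff₀ hsq]
        have := hy.2
        simp only [hBndef] at this
        linarith [this]
  -- dominating function
  set G : ℝ → ℝ := fun y => Real.exp (-(c/4) * y^2) + Real.exp (-(m/B^2) * y^2) with hGdef
  have hGint : Integrable G := (integrable_exp_neg_mul_sq (by positivity)).add
    (integrable_exp_neg_mul_sq (by positivity))
  have hGpos : ∀ y : ℝ, 0 ≤ G y := fun y => by positivity
  have hmeas : ∀ n : ℕ, AEStronglyMeasurable (F n) volume := by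
    intro n
    apply (aestronglyMeasurable_indicator_iff measurableSet_Ioc).mpr
    apply ContinuousOn.aestronglyMeasurable ?_ measurableSet_Ioc
    have h1 : ContinuousOn (fun y => f (xi + y / Real.sqrt n)) (Set.Ioc (A n) (Bn n)) := by
      apply hf.continuousOn.comp
        ((continuous_const.add (continuous_id.div_const _)).continuousOn)
      intro y hy
      obtain ⟨_, hy1, hy2⟩ := hmem n y hy
      simp only [Set.mem_Icc, id_eq, Pi.add_apply]
      constructor <;> linarith
    exact Real.continuous_exp.comp_continuousOn
      (continuousOn_const.mul (h1.sub continuousOn_const))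
  have hbound : ∀ n : ℕ, ∀ y : ℝ, ‖F n y‖ ≤ G y := by
    intro n y
    by_cases hy : y ∈ Set.Ioc (A n) (Bn n)
    · obtain ⟨hn1, hy1, hy2⟩ := hmem n y hy
      set h := y / Real.sqrt n with hhdef
      have hnpos : (0:ℝ) < n := by exact_mod_cast hn1
      have hsq : Real.sqrt n ^ 2 = (n:ℝ) := Real.sq_sqrt hnpos.le
      have hsqpos : 0 < Real.sqrt n := Real.sqrt_pos.2 hnpos
      have hy2eq : (n:ℝ) * h^2 = y^2 := by
        simp only [hhdef, div_pow, hsq]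
        field_simp
      have hIcc : xi + h ∈ Set.Icc a b := ⟨by linarith, by linarith⟩
      simp only [hFdef, Set.indicator_of_mem hy]
      rw [Real.norm_eq_abs, abs_of_pos (Real.exp_pos _)]
      rcases le_or_gt |h| δ₀ with hcase | hcase
      · have hlb := hlow h hcase
        have hle : (φ n) y ≤ Real.exp (-(c/4) * y^2) := by
          apply Real.exp_le_exp.2
          have hmul : (n:ℝ) * (c/4 * h^2) ≤ (n:ℝ) * (f (xi+h) - f xi) :=
            mul_le_mul_of_nonneg_left hlb hnpos.le
          calc -(n:ℝ) * (f (xi + y / Real.sqrt n) - f xi)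
              = -((n:ℝ) * (f (xi+h) - f xi)) := by rw [hhdef]; ring
            _ ≤ -((n:ℝ)*(c/4*h^2)) := by linarith
            _ = -(c/4) * ((n:ℝ) * h^2) := by ring
            _ = -(c/4) * y^2 := by rw [hy2eq]
        exact le_trans hle (le_add_of_nonneg_right (Real.exp_pos _).le)
      · have hK2 : xi + h ∈ K := by
          refine ⟨hIcc, ?_⟩
          simp only [Set.mem_setOf_eq, add_sub_cancel_left]
          exact hcase.le
        have hfb := hKbound _ hK2
        have hhB : |h| ≤ B := by
          rw [abs_le]
          constructor
          · have h1 : xi - a ≤ B := le_max_left _ _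
            linarith
          · exact le_trans hy2 (le_max_right _ _)
        have hh2B : h^2 ≤ B^2 := by
          rw [← sq_abs]
          exact pow_le_pow_left₀ (abs_nonneg _) hhB 2
        have hyB : y^2 ≤ (n:ℝ) * B^2 := by
          rw [← hy2eq]
          nlinarith
        have hexp : -(n:ℝ) * (f (xi + y / Real.sqrt n) - f xi) ≤ -(m/B^2) * y^2 := by
          have h1 : m/B^2 * y^2 ≤ m/B^2 * ((n:ℝ)*B^2) :=
            mul_le_mul_of_nonneg_left hyB (by positivity)
          have h2 : m/B^2 * ((n:ℝ)*B^2) = (n:ℝ) * m := by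
            field_simp
          have h3 : (n:ℝ) * m ≤ (n:ℝ) * (f (xi+h) - f xi) :=
            mul_le_mul_of_nonneg_left (by linarith) hnpos.le
          have h4 : f (xi + y / Real.sqrt n) = f (xi + h) := by rw [hhdef]
          rw [h4, neg_mul, neg_mul, neg_le_neg_iff]
          exact (h1.trans (le_of_eq h2)).trans h3
        exact le_trans (Real.exp_le_exp.2 hexp) (le_add_of_nonneg_left (Real.exp_pos _).le)
    · simp only [hFdef, Set.indicator_of_notMem hy, norm_zero]
      exact hGpos y
  -- pointwise convergence
  have hsq_tend : Tendsto (fun n : ℕ => Real.sqrt n) atTop atTop := by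
    apply tendsto_atTop_atTop_of_monotone
    · intro p q hpq
      exact Real.sqrt_le_sqrt (by exact_mod_cast hpq)
    · intro C
      rcases le_or_gt C 0 with hC | hC
      · exact ⟨0, by simpa using hC.trans (Real.sqrt_nonneg 0)⟩
      · refine ⟨⌈C^2⌉₊, ?_⟩
        rw [Real.le_sqrt hC.le (by positivity)]
        exact_mod_cast Nat.le_ceil _
  have hlim : ∀ y : ℝ, Tendsto (fun n => F n y) atTop
      (nhds (Real.exp (-(c/2) * y^2))) := by
    intro y
    have hev : ∀ᶠ n : ℕ in atTop, F n y = φ n y := by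
      have h1 : ∀ᶠ n : ℕ in atTop, A n < y := by
        have hA : Tendsto A atTop atBot :=
          hsq_tend.atTop_mul_const_of_neg (by linarith : a - xi < 0)
        exact hA.eventually (eventually_lt_atBot y)
      have h2 : ∀ᶠ n : ℕ in atTop, y ≤ Bn n := by
        have hB2 : Tendsto Bn atTop atTop :=
          hsq_tend.atTop_mul_const (by linarith : (0:ℝ) < b - xi)
        exact hB2.eventually (eventually_ge_atTop y)
      filter_upwards [h1, h2] with n hn1 hn2
      simp only [hFdef, Set.indicator_of_mem (Set.mem_Ioc.2 ⟨hn1, hn2⟩)]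
    have hinner : Tendsto (fun n : ℕ => (n:ℝ) * (f (xi + y / Real.sqrt n) - f xi))
        atTop (nhds (c/2 * y^2)) := by
      rw [Metric.tendsto_atTop]
      intro ε hε
      have hε' : 0 < ε / (2 * (y^2 + 1)) := by positivity
      obtain ⟨δ, hδpos, _, _, hTd⟩ := key (ε / (2 * (y^2 + 1))) hε'
      refine ⟨max 1 ⌈(|y|/δ)^2⌉₊, fun n hn => ?_⟩
      have hn1 : 1 ≤ n := le_trans (le_max_left _ _) hn
      have hnpos : (0:ℝ) < n := by exact_mod_cast hn1
      have hsqpos : 0 < Real.sqrt n := Real.sqrt_pos.2 hnpos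
      have hceil : ((|y|/δ)^2 : ℝ) ≤ (n:ℝ) := by
        calc ((|y|/δ)^2:ℝ) ≤ (⌈(|y|/δ)^2⌉₊ : ℝ) := Nat.le_ceil _
          _ ≤ (n:ℝ) := by exact_mod_cast le_trans (le_max_right _ _) hn
      have hsqge : |y|/δ ≤ Real.sqrt n := by
        rw [Real.le_sqrt (by positivity) (by positivity)]
        exact hceil
      have hh : |y / Real.sqrt n| ≤ δ := by
        rw [abs_div, abs_of_pos hsqpos, div_le_iff₀ hsqpos]
        rw [div_le_iff₀ hδpos] at hsqge
        linarith
      have hTT := hTd (y / Real.sqrt n) hh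
      have hy2eq : (n:ℝ) * (y / Real.sqrt n)^2 = y^2 := by
        rw [div_pow, Real.sq_sqrt hnpos.le]
        field_simp
      rw [Real.dist_eq]
      have habs : |(n:ℝ) * (f (xi + y / Real.sqrt n) - f xi) - c/2*y^2|
          = (n:ℝ) * |f (xi + y / Real.sqrt n) - f xi - c/2*(y/Real.sqrt n)^2| := by
        rw [← abs_of_pos hnpos, ← abs_mul, abs_of_pos hnpos]
        congr 1
        rw [← hy2eq]
        ring
      rw [habs]
      have hstep : (n:ℝ) * |f (xi + y / Real.sqrt n) - f xi - c/2*(y/Real.sqrt n)^2|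
          ≤ (n:ℝ) * (ε / (2 * (y^2 + 1)) * (y/Real.sqrt n)^2) :=
        mul_le_mul_of_nonneg_left hTT hnpos.le
      have hstep2 : (n:ℝ) * (ε / (2 * (y^2 + 1)) * (y/Real.sqrt n)^2)
          = ε / (2 * (y^2 + 1)) * y^2 := by
        rw [← hy2eq]
        ring
      have hstep3 : ε / (2 * (y^2 + 1)) * y^2 < ε := by
        rw [div_mul_eq_mul_div, div_lt_iff₀ (by positivity)]
        nlinarith [sq_nonneg y]
      calc (n:ℝ) * |f (xi + y / Real.sqrt n) - f xi - c/2*(y/Real.sqrt n)^2|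
          ≤ ε / (2 * (y^2 + 1)) * y^2 := by rw [← hstep2]; exact hstep
        _ < ε := hstep3
    have hφ : Tendsto (fun n : ℕ => φ n y) atTop (nhds (Real.exp (-(c/2) * y^2))) := by
      have hneg : Tendsto (fun n : ℕ => -(n:ℝ) * (f (xi + y / Real.sqrt n) - f xi))
          atTop (nhds (-(c/2) * y^2)) := by
        have := hinner.neg
        simp only [neg_mul] at this ⊢
        convert this using 2
      exact (Real.continuous_exp.tendsto _).comp hneg
    exact Tendsto.congr' (by filter_upwards [hev] with n hn; exact hn.symm) hφ
  -- dominated convergence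
  have hDCT : Tendsto (fun n => ∫ y, F n y) atTop
      (nhds (∫ y : ℝ, Real.exp (-(c/2) * y^2))) :=
    MeasureTheory.tendsto_integral_of_dominated_convergence G hmeas hGint
      (fun n => Eventually.of_forall (hbound n))
      (Eventually.of_forall hlim)
  have hgauss : (∫ y : ℝ, Real.exp (-(c/2) * y^2)) = Real.sqrt (2 * Real.pi / c) := by
    rw [integral_gaussian]
    congr 1
    field_simp
  rw [hgauss] at hDCT
  -- change of variables
  have hchg : ∀ n : ℕ, 1 ≤ n → (∫ y, F n y)
      = Real.sqrt n * ∫ x in a..b, Real.exp (-(n:ℝ) * (f x - f xi)) := by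
    intro n hn
    have hnpos : (0:ℝ) < n := by exact_mod_cast hn
    have hsqpos : 0 < Real.sqrt n := Real.sqrt_pos.2 hnpos
    have hsqne : Real.sqrt n ≠ 0 := hsqpos.ne'
    have hAB : A n ≤ Bn n := by
      simp only [hAdef, hBndef]
      apply mul_le_mul_of_nonneg_left (by linarith) hsqpos.le
    rw [hFdef]
    rw [MeasureTheory.integral_indicator measurableSet_Ioc]
    rw [← intervalIntegral.integral_of_le hAB]
    have h1 : (∫ y in A n..Bn n, φ n y)
        = Real.sqrt n • ∫ t in (A n)/Real.sqrt n..(Bn n)/Real.sqrt n,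
            Real.exp (-(n:ℝ)*(f (xi + t) - f xi)) :=
      intervalIntegral.integral_comp_div
        (fun t => Real.exp (-(n:ℝ)*(f (xi+t) - f xi))) hsqne
    rw [h1]
    have hAe : (A n)/Real.sqrt n = a - xi := by
      simp only [hAdef]
      exact mul_div_cancel_left₀ _ hsqne
    have hBe : (Bn n)/Real.sqrt n = b - xi := by
      simp only [hBndef]
      exact mul_div_cancel_left₀ _ hsqne
    rw [hAe, hBe, smul_eq_mul]
    congr 1
    have h2 : (∫ t in (a - xi)..(b - xi), Real.exp (-(n:ℝ)*(f (xi + t) - f xi)))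
        = ∫ x in (xi + (a - xi))..(xi + (b - xi)), Real.exp (-(n:ℝ)*(f x - f xi)) :=
      intervalIntegral.integral_comp_add_left
        (fun x => Real.exp (-(n:ℝ)*(f x - f xi))) xi
    rw [h2]
    congr 1 <;> ring
  -- conclusion
  rw [hc2]
  have hLpos : 0 < Real.sqrt (2*Real.pi/c) := Real.sqrt_pos.2 (by positivity)
  rw [Asymptotics.isEquivalent_iff_tendsto_one]
  swap
  · filter_upwards [eventually_ge_atTop 1] with n hn
    have hnpos : (0:ℝ) < n := by exact_mod_cast hn
    have h1 : (0:ℝ) < Real.sqrt (2 * Real.pi / ((n:ℝ) * c)) :=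
      Real.sqrt_pos.2 (by positivity)
    positivity
  have hfinal := hDCT.div_const (Real.sqrt (2*Real.pi/c))
  rw [div_self hLpos.ne'] at hfinal
  refine Tendsto.congr' ?_ hfinal
  filter_upwards [eventually_ge_atTop 1] with n hn
  have hnpos : (0:ℝ) < n := by exact_mod_cast hn
  have hsqpos : 0 < Real.sqrt n := Real.sqrt_pos.2 hnpos
  have hSpos : (0:ℝ) < Real.sqrt (2 * Real.pi / ((n:ℝ) * c)) :=
    Real.sqrt_pos.2 (by positivity)
  have hEpos : (0:ℝ) < Real.exp (-(n:ℝ) * f xi) := Real.exp_pos _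
  have hu : (∫ x in a..b, Real.exp (-(n:ℝ) * f x))
      = (∫ x in a..b, Real.exp (-(n:ℝ)*(f x - f xi))) * Real.exp (-(n:ℝ)*f xi) := by
    rw [← intervalIntegral.integral_mul_const]
    apply intervalIntegral.integral_congr
    intro x _
    dsimp only
    rw [← Real.exp_add]
    congr 1
    ring
  have hsplit : Real.sqrt n * Real.sqrt (2*Real.pi/((n:ℝ)*c))
      = Real.sqrt (2*Real.pi/c) := by
    rw [← Real.sqrt_mul hnpos.le]
    congr 1
    field_simp
  have hchgn := hchg n hn
  simp only [Pi.div_apply]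
  rw [hu, hchgn, ← hsplit]
  rw [mul_div_mul_left _ _ hsqpos.ne', mul_div_mul_right _ _ hEpos.ne']
end

section
/- (Laplace's method, boundary minimum) Let f : [a,b] → ℝ be twice continuously differentiable with its unique minimum at x_i = a, f″(a) > 0, f′(a) = 0, and f(x) > f(a) for x > a. Then as n → ∞, ∫_a^b e^{−n f(x)} dx = (1 + o(1))·(1/2)·√(2π/(n f″(a)))·e^{−n f(a)}. -/
open MeasureTheory Real Filter Asymptotics intervalIntegral

open Topology

theorem lap_itder_congr_set {f : ℝ → ℝ} {s t : Set ℝ} {x : ℝ} (h : s =ᶠ[nhds x] t) (n : ℕ) :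
    iteratedDerivWithin n f s x = iteratedDerivWithin n f t x := by
  simp only [iteratedDerivWithin, iteratedFDerivWithin_congr_set h]

theorem lapA (a b : ℝ) (hab : a < b) (f : ℝ → ℝ)
    (hf : ContDiffOn ℝ 2 f (Set.Icc a b))
    (hf' : derivWithin f (Set.Icc a b) a = 0) {ε : ℝ} (hε : 0 < ε) :
    ∃ δ > 0, ∀ x ∈ Set.Icc a b, x - a ≤ δ →
      |f x - f a - iteratedDerivWithin 2 f (Set.Icc a b) a / 2 * (x - a) ^ 2| ≤ ε * (x - a) ^ 2 := by
  set c := iteratedDerivWithin 2 f (Set.Icc a b) a with hc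
  have hu : UniqueDiffOn ℝ (Set.Icc a b) := uniqueDiffOn_Icc hab
  have hcont : ContinuousOn (iteratedDerivWithin 2 f (Set.Icc a b)) (Set.Icc a b) :=
    hf.continuousOn_iteratedDerivWithin le_rfl hu
  have hca : ContinuousWithinAt (iteratedDerivWithin 2 f (Set.Icc a b)) (Set.Icc a b) a :=
    hcont a (Set.left_mem_Icc.2 hab.le)
  rw [Metric.continuousWithinAt_iff] at hca
  obtain ⟨δ, hδ, hδ'⟩ := hca (2 * ε) (by positivity)
  refine ⟨δ, hδ, ?_⟩
  intro x hx hxa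
  rcases eq_or_lt_of_le hx.1 with heq | hlt
  · simp [← heq]
  · have hsub : Set.Icc a x ⊆ Set.Icc a b := Set.Icc_subset_Icc le_rfl hx.2
    have h1 : ContDiffOn ℝ 1 f (Set.Icc a x) := (hf.of_le (by norm_num)).mono hsub
    have h2 : DifferentiableOn ℝ (iteratedDerivWithin 1 f (Set.Icc a x)) (Set.Ioo a x) :=
      ((hf.mono hsub).differentiableOn_iteratedDerivWithin (by norm_num)
        (uniqueDiffOn_Icc hlt)).mono Set.Ioo_subset_Icc_self
    obtain ⟨ξ, hξ, hT⟩ := taylor_mean_remainder_lagrange (n := 1) hlt.ne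
      (by rw [Set.uIcc_of_le hlt.le]; exact_mod_cast h1)
      (by rwa [Set.uIcc_of_le hlt.le, Set.uIoo_of_le hlt.le])
    rw [Set.uIoo_of_le hlt.le] at hξ
    rw [Set.uIcc_of_le hlt.le] at hT
    norm_num [Nat.factorial] at hT
    have hset : Set.Icc a x =ᶠ[nhds a] Set.Icc a b := by
      rw [Filter.eventuallyEq_set]
      filter_upwards [Iio_mem_nhds hlt] with y hy
      simp only [Set.mem_Icc]
      constructor
      · rintro ⟨h1', h2'⟩; exact ⟨h1', by linarith [hx.2]⟩
      · rintro ⟨h1', h2'⟩; exact ⟨h1', le_of_lt hy⟩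
    have hd0 : derivWithin f (Set.Icc a x) a = 0 := by
      rw [derivWithin_congr_set hset, hf']
    have hξ2 : iteratedDerivWithin 2 f (Set.Icc a x) ξ = iteratedDerivWithin 2 f (Set.Icc a b) ξ := by
      apply lap_itder_congr_set
      rw [Filter.eventuallyEq_set]
      filter_upwards [Ioo_mem_nhds hξ.1 hξ.2] with y hy
      simp only [Set.mem_Icc]
      constructor
      · rintro ⟨h1', h2'⟩; exact ⟨h1', by linarith [hx.2]⟩
      · rintro ⟨h1', _⟩; exact ⟨h1', by linarith [hy.2]⟩
    have hξmem : ξ ∈ Set.Icc a b := ⟨hξ.1.le, le_trans hξ.2.le hx.2⟩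
    have hdist : dist ξ a < δ := by
      rw [Real.dist_eq, abs_of_pos (by linarith [hξ.1] : (0:ℝ) < ξ - a)]
      have := hξ.2
      linarith
    have hest : |iteratedDerivWithin 2 f (Set.Icc a b) ξ - c| < 2 * ε := by
      have := hδ' hξmem hdist
      rwa [Real.dist_eq] at this
    rw [hd0,
      mul_zero, add_zero, hξ2] at hT
    have hfx : f x - f a = iteratedDerivWithin 2 f (Set.Icc a b) ξ * (x - a) ^ 2 / 2 := hT
    have h' : f x - f a - c / 2 * (x - a) ^ 2 =
        (iteratedDerivWithin 2 f (Set.Icc a b) ξ - c) / 2 * (x - a) ^ 2 := by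
      rw [hfx]; ring
    rw [h', abs_mul, abs_of_nonneg (sq_nonneg (x - a)), abs_div, abs_two]
    have hb2 : |iteratedDerivWithin 2 f (Set.Icc a b) ξ - c| / 2 ≤ ε := by linarith
    exact mul_le_mul_of_nonneg_right hb2 (sq_nonneg _)

theorem lapB (a b : ℝ) (hab : a < b) (f : ℝ → ℝ)
    (hf : ContDiffOn ℝ 2 f (Set.Icc a b))
    (hmin : ∀ x ∈ Set.Icc a b, x ≠ a → f a < f x)
    (hf' : derivWithin f (Set.Icc a b) a = 0)
    (hf'' : 0 < iteratedDerivWithin 2 f (Set.Icc a b) a) :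
    ∃ k > 0, ∀ x ∈ Set.Icc a b, k * (x - a) ^ 2 ≤ f x - f a := by
  set c := iteratedDerivWithin 2 f (Set.Icc a b) a with hc
  obtain ⟨δ, hδ, hA⟩ := lapA a b hab f hf hf' (show (0:ℝ) < c / 4 by positivity)
  have hnear : ∀ x ∈ Set.Icc a b, x - a ≤ δ → c / 4 * (x - a) ^ 2 ≤ f x - f a := by
    intro x hx hxδ
    have h := (abs_le.1 (hA x hx hxδ)).1
    nlinarith [sq_nonneg (x - a)]
  rcases (Set.Icc a b ∩ Set.Ici (a + δ)).eq_empty_or_nonempty with hK | hK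
  · refine ⟨c / 4, by positivity, fun x hx => ?_⟩
    apply hnear x hx
    by_contra hcon
    exact Set.eq_empty_iff_forall_notMem.1 hK x ⟨hx, by push_neg at hcon; simp only [Set.mem_Ici]; linarith⟩
  · have hKc : IsCompact (Set.Icc a b ∩ Set.Ici (a + δ)) :=
      isCompact_Icc.inter_right isClosed_Ici
    obtain ⟨x₀, hx₀K, hx₀min'⟩ := hKc.exists_isMinOn hK
      ((hf.continuousOn.sub continuousOn_const).mono Set.inter_subset_left)
    have hx₀min : ∀ y ∈ Set.Icc a b ∩ Set.Ici (a + δ), f x₀ - f a ≤ f y - f a :=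
      fun y hy => hx₀min' hy
    have hm : 0 < f x₀ - f a := by
      have : x₀ ≠ a := by
        have := hx₀K.2
        simp only [Set.mem_Ici] at this
        intro h; rw [h] at this; linarith
      linarith [hmin x₀ hx₀K.1 this]
    have hba : (0:ℝ) < (b - a) ^ 2 := pow_pos (sub_pos.2 hab) 2
    refine ⟨min (c / 4) ((f x₀ - f a) / (b - a) ^ 2), lt_min (by positivity) (div_pos hm hba),
      fun x hx => ?_⟩
    rcases le_or_gt (x - a) δ with hle | hgt
    · calc min (c / 4) ((f x₀ - f a) / (b - a) ^ 2) * (x - a) ^ 2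
          ≤ c / 4 * (x - a) ^ 2 :=
            mul_le_mul_of_nonneg_right (min_le_left _ _) (sq_nonneg _)
        _ ≤ f x - f a := hnear x hx hle
    · have hxK : x ∈ Set.Icc a b ∩ Set.Ici (a + δ) := ⟨hx, by simp [Set.mem_Ici]; linarith⟩
      have hsq : (x - a) ^ 2 ≤ (b - a) ^ 2 := by nlinarith [hx.1, hx.2]
      calc min (c / 4) ((f x₀ - f a) / (b - a) ^ 2) * (x - a) ^ 2
          ≤ (f x₀ - f a) / (b - a) ^ 2 * (b - a) ^ 2 := by
            apply mul_le_mul (min_le_right _ _) hsq (sq_nonneg _)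
            positivity
        _ = f x₀ - f a := by field_simp; exact div_self (sub_pos.2 hab).ne'
        _ ≤ f x - f a := hx₀min x hxK

theorem lap_sqrt_atTop : Tendsto (fun n : ℕ => Real.sqrt n) atTop atTop := by
  apply tendsto_atTop_atTop.2
  intro M
  refine ⟨⌈M ^ 2⌉₊, fun n hn => ?_⟩
  calc M ≤ Real.sqrt (M ^ 2) := by
        rw [Real.sqrt_sq_eq_abs]; exact le_abs_self M
    _ ≤ Real.sqrt n := Real.sqrt_le_sqrt (le_trans (Nat.le_ceil _) (by exact_mod_cast hn))

theorem lapC (a b : ℝ) (hab : a < b) (f : ℝ → ℝ)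
    (hf : ContDiffOn ℝ 2 f (Set.Icc a b))
    (hf' : derivWithin f (Set.Icc a b) a = 0) {u : ℝ} (hu : 0 < u) :
    Tendsto (fun n : ℕ => (n : ℝ) * (f (a + u / Real.sqrt n) - f a)) atTop
      (𝓝 (iteratedDerivWithin 2 f (Set.Icc a b) a / 2 * u ^ 2)) := by
  set c := iteratedDerivWithin 2 f (Set.Icc a b) a with hc
  have hdiv : Tendsto (fun n : ℕ => u / Real.sqrt n) atTop (𝓝 0) :=
    Tendsto.div_atTop tendsto_const_nhds lap_sqrt_atTop
  rw [Metric.tendsto_atTop] at *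
  intro ε' hε'
  have hεpos : 0 < ε' / (u ^ 2 + 1) := by positivity
  obtain ⟨δ, hδ, hA⟩ := lapA a b hab f hf hf' hεpos
  obtain ⟨N₁, hN₁⟩ := hdiv (min δ (b - a)) (lt_min hδ (sub_pos.2 hab))
  refine ⟨max N₁ 1, fun n hn => ?_⟩
  have hn1 : 1 ≤ n := le_trans (le_max_right _ _) hn
  have hnn : (0:ℝ) < n := by exact_mod_cast hn1
  have hsn : (0:ℝ) < Real.sqrt n := Real.sqrt_pos.2 hnn
  have hd := hN₁ n (le_trans (le_max_left _ _) hn)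
  rw [Real.dist_eq, sub_zero, abs_of_pos (div_pos hu hsn)] at hd
  have hd1 : u / Real.sqrt n ≤ δ := le_of_lt (lt_of_lt_of_le hd (min_le_left _ _))
  have hd2 : u / Real.sqrt n ≤ b - a := le_of_lt (lt_of_lt_of_le hd (min_le_right _ _))
  set x := a + u / Real.sqrt n with hxdef
  have hxmem : x ∈ Set.Icc a b := by
    rw [Set.mem_Icc]
    have h0 : 0 ≤ u / Real.sqrt n := (div_pos hu hsn).le
    constructor
    · simp only [hxdef]; linarith
    · simp only [hxdef]; linarith
  have hxa : x - a = u / Real.sqrt n := by simp [hxdef]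
  have hx2 : (x - a) ^ 2 = u ^ 2 / n := by
    rw [hxa, div_pow, Real.sq_sqrt (Nat.cast_nonneg n)]
  have habs := hA x hxmem (by rw [hxa]; exact hd1)
  rw [hx2] at habs
  rw [Real.dist_eq]
  have key : (n : ℝ) * (f x - f a - c / 2 * (u ^ 2 / n)) =
      (n : ℝ) * (f x - f a) - c / 2 * u ^ 2 := by
    field_simp
  have : |(n : ℝ) * (f x - f a) - c / 2 * u ^ 2| ≤ (n : ℝ) * (ε' / (u ^ 2 + 1) * (u ^ 2 / n)) := by
    rw [← key, abs_mul, abs_of_pos hnn]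
    exact mul_le_mul_of_nonneg_left habs hnn.le
  have heq : (n : ℝ) * (ε' / (u ^ 2 + 1) * (u ^ 2 / n)) = ε' * (u ^ 2 / (u ^ 2 + 1)) := by
    field_simp
  have hlt : ε' * (u ^ 2 / (u ^ 2 + 1)) < ε' := by
    have h1 : u ^ 2 / (u ^ 2 + 1) < 1 := by
      rw [div_lt_one (by positivity)]; linarith
    calc ε' * (u ^ 2 / (u ^ 2 + 1)) < ε' * 1 := by
          exact mul_lt_mul_of_pos_left h1 hε'
      _ = ε' := mul_one ε'
  calc |(n : ℝ) * (f x - f a) - c / 2 * u ^ 2| ≤ (n : ℝ) * (ε' / (u ^ 2 + 1) * (u ^ 2 / n)) := this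
    _ = ε' * (u ^ 2 / (u ^ 2 + 1)) := heq
    _ < ε' := hlt

theorem lapD (a b : ℝ) (hab : a < b) (f : ℝ → ℝ)
    (hf : ContDiffOn ℝ 2 f (Set.Icc a b))
    (hmin : ∀ x ∈ Set.Icc a b, x ≠ a → f a < f x)
    (hf' : derivWithin f (Set.Icc a b) a = 0)
    (hf'' : 0 < iteratedDerivWithin 2 f (Set.Icc a b) a) :
    Tendsto (fun n : ℕ => Real.sqrt n * ∫ x in a..b, Real.exp (-((n : ℝ) * (f x - f a)))) atTop
      (𝓝 (Real.sqrt (π / (iteratedDerivWithin 2 f (Set.Icc a b) a / 2)) / 2)) := by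
  set c := iteratedDerivWithin 2 f (Set.Icc a b) a with hc
  obtain ⟨k, hk, hkb⟩ := lapB a b hab f hf hmin hf' hf''
  have hba : (0:ℝ) < b - a := sub_pos.2 hab
  set φ : ℕ → ℝ → ℝ := fun n u => Real.exp (-((n : ℝ) * (f (a + u / Real.sqrt n) - f a)))
    with hφdef
  -- maps-to fact
  have hmaps : ∀ n : ℕ, ∀ u ∈ Set.Ioc (0:ℝ) (Real.sqrt n * (b - a)),
      a + u / Real.sqrt n ∈ Set.Icc a b := by
    intro n u hu
    have hsn : (0:ℝ) < Real.sqrt n := by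
      rcases lt_or_ge 0 (Real.sqrt n) with h | h
      · exact h
      · exfalso
        have : Real.sqrt n * (b - a) ≤ 0 := mul_nonpos_of_nonpos_of_nonneg h hba.le
        have := hu.2
        have := hu.1
        nlinarith [Real.sqrt_nonneg (n:ℝ)]
    have h1 : 0 ≤ u / Real.sqrt n := (div_pos hu.1 hsn).le
    have h2 : u / Real.sqrt n ≤ b - a := by
      rw [div_le_iff₀ hsn]
      calc u ≤ Real.sqrt n * (b - a) := hu.2
        _ = (b - a) * Real.sqrt n := mul_comm _ _
    exact ⟨by linarith, by linarith⟩
  -- DCT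
  have hDCT : Tendsto
      (fun n : ℕ => ∫ u in Set.Ioi (0:ℝ),
        (Set.Ioc (0:ℝ) (Real.sqrt n * (b - a))).indicator (φ n) u) atTop
      (𝓝 (∫ u in Set.Ioi (0:ℝ), Real.exp (-(c / 2 * u ^ 2)))) := by
    apply tendsto_integral_of_dominated_convergence (fun u => Real.exp (-k * u ^ 2))
    · -- measurability
      intro n
      have hcontφ : ContinuousOn (φ n) (Set.Ioc (0:ℝ) (Real.sqrt n * (b - a))) := by
        apply Real.continuous_exp.comp_continuousOn
        apply ContinuousOn.neg
        apply ContinuousOn.mul continuousOn_const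
        apply ContinuousOn.sub _ continuousOn_const
        exact hf.continuousOn.comp
          (Continuous.continuousOn (by continuity)) (fun u hu => hmaps n u hu)
      rw [aestronglyMeasurable_indicator_iff measurableSet_Ioc,
        Measure.restrict_restrict measurableSet_Ioc,
        Set.inter_eq_self_of_subset_left Set.Ioc_subset_Ioi_self]
      exact hcontφ.aestronglyMeasurable measurableSet_Ioc
    · -- bound integrable
      exact (integrable_exp_neg_mul_sq hk).restrict
    · -- bound
      intro n
      apply Eventually.of_forall
      intro u
      by_cases hmem : u ∈ Set.Ioc (0:ℝ) (Real.sqrt n * (b - a))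
      · rw [Set.indicator_of_mem hmem]
        have hsn : (0:ℝ) < Real.sqrt n := by
          rcases lt_or_ge 0 (Real.sqrt n) with h | h
          · exact h
          · exfalso
            have : Real.sqrt n * (b - a) ≤ 0 := mul_nonpos_of_nonpos_of_nonneg h hba.le
            have := hmem.2
            have := hmem.1
            nlinarith [Real.sqrt_nonneg (n:ℝ)]
        have hnn : (0:ℝ) < n := Real.sqrt_pos.1 hsn
        have hxmem := hmaps n u hmem
        have hgx := hkb _ hxmem
        have hx2 : (a + u / Real.sqrt n - a) ^ 2 = u ^ 2 / n := by
          rw [add_sub_cancel_left, div_pow, Real.sq_sqrt (Nat.cast_nonneg n)]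
        rw [hx2] at hgx
        have hmul := mul_le_mul_of_nonneg_left hgx hnn.le
        have heq2 : (n:ℝ) * (k * (u ^ 2 / n)) = k * u ^ 2 := by
          field_simp
        rw [heq2] at hmul
        simp only [hφdef, Real.norm_eq_abs, Real.abs_exp]
        apply Real.exp_le_exp.2
        nlinarith
      · rw [Set.indicator_of_notMem hmem]
        simp only [norm_zero]
        exact (Real.exp_pos _).le
    · -- pointwise limit
      rw [MeasureTheory.ae_restrict_iff' measurableSet_Ioi]
      apply Eventually.of_forall
      intro u hu
      simp only [Set.mem_Ioi] at hu
      have hTat : Tendsto (fun n : ℕ => Real.sqrt n * (b - a)) atTop atTop :=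
        Tendsto.atTop_mul_const hba lap_sqrt_atTop
      have hev : (fun n : ℕ => (Set.Ioc (0:ℝ) (Real.sqrt n * (b - a))).indicator (φ n) u)
          =ᶠ[atTop] fun n => φ n u := by
        filter_upwards [hTat.eventually_ge_atTop u] with n hn
        exact Set.indicator_of_mem (Set.mem_Ioc.mpr ⟨hu, hn⟩) _
      have hφlim : Tendsto (fun n : ℕ => φ n u) atTop (𝓝 (Real.exp (-(c / 2 * u ^ 2)))) := by
        have h1 := lapC a b hab f hf hf' hu
        exact (Real.continuous_exp.tendsto _).comp h1.neg
      exact Tendsto.congr' hev.symm hφlim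
  -- value of the limit integral
  have hval : ∫ u in Set.Ioi (0:ℝ), Real.exp (-(c / 2 * u ^ 2)) = Real.sqrt (π / (c / 2)) / 2 := by
    have : ∀ u : ℝ, -(c / 2 * u ^ 2) = -(c / 2) * u ^ 2 := fun u => by ring
    simp_rw [this]
    exact integral_gaussian_Ioi (c / 2)
  rw [hval] at hDCT
  -- identification of the integrals for n ≥ 1
  have hiden : (fun n : ℕ => ∫ u in Set.Ioi (0:ℝ),
        (Set.Ioc (0:ℝ) (Real.sqrt n * (b - a))).indicator (φ n) u)
      =ᶠ[atTop] fun n : ℕ => Real.sqrt n * ∫ x in a..b, Real.exp (-((n : ℝ) * (f x - f a))) := by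
    filter_upwards [eventually_ge_atTop 1] with n hn1
    have hnn : (0:ℝ) < n := by exact_mod_cast hn1
    have hsn : (0:ℝ) < Real.sqrt n := Real.sqrt_pos.2 hnn
    have hTnn : (0:ℝ) ≤ Real.sqrt n * (b - a) := by positivity
    rw [MeasureTheory.integral_indicator measurableSet_Ioc,
      Measure.restrict_restrict measurableSet_Ioc,
      Set.inter_eq_self_of_subset_left Set.Ioc_subset_Ioi_self,
      ← intervalIntegral.integral_of_le hTnn]
    have e3 : ∫ u in (0:ℝ)..(Real.sqrt n * (b - a)),
        (fun x => Real.exp (-((n : ℝ) * (f (a + x) - f a)))) (u / Real.sqrt n)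
        = Real.sqrt n • ∫ x in (0:ℝ) / Real.sqrt n..(Real.sqrt n * (b - a)) / Real.sqrt n,
          Real.exp (-((n : ℝ) * (f (a + x) - f a))) :=
      intervalIntegral.integral_comp_div (fun x => Real.exp (-((n : ℝ) * (f (a + x) - f a))))
        hsn.ne'
    have hTb : Real.sqrt n * (b - a) / Real.sqrt n = b - a := by
      field_simp
    rw [zero_div, hTb] at e3
    have e4 : ∫ x in (0:ℝ)..(b - a), Real.exp (-((n : ℝ) * (f (a + x) - f a)))
        = ∫ y in (a + 0)..(a + (b - a)), Real.exp (-((n : ℝ) * (f y - f a))) :=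
      intervalIntegral.integral_comp_add_left (fun y => Real.exp (-((n : ℝ) * (f y - f a)))) a
    rw [add_zero, add_sub_cancel] at e4
    calc ∫ u in (0:ℝ)..(Real.sqrt n * (b - a)), φ n u
        = ∫ u in (0:ℝ)..(Real.sqrt n * (b - a)),
          (fun x => Real.exp (-((n : ℝ) * (f (a + x) - f a)))) (u / Real.sqrt n) := rfl
      _ = Real.sqrt n • ∫ x in (0:ℝ)..(b - a), Real.exp (-((n : ℝ) * (f (a + x) - f a))) := e3
      _ = Real.sqrt n * ∫ x in a..b, Real.exp (-((n : ℝ) * (f x - f a))) := by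
          rw [e4, smul_eq_mul]
  exact Tendsto.congr' hiden hDCT

/-- Laplace's method, boundary minimum at the left endpoint `a`. -/
theorem laplace_boundary (a b : ℝ) (hab : a < b) (f : ℝ → ℝ)
    (hf : ContDiffOn ℝ 2 f (Set.Icc a b))
    (hmin : ∀ x ∈ Set.Icc a b, x ≠ a → f a < f x)
    (hf' : derivWithin f (Set.Icc a b) a = 0)
    (hf'' : 0 < iteratedDerivWithin 2 f (Set.Icc a b) a) :
    (fun n : ℕ => ∫ x in a..b, Real.exp (-(n : ℝ) * f x)) ~[atTop]
      (fun n : ℕ =>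
        (1 / 2) * Real.sqrt (2 * Real.pi / ((n : ℝ) * iteratedDerivWithin 2 f (Set.Icc a b) a))
          * Real.exp (-(n : ℝ) * f a)) := by
  set c := iteratedDerivWithin 2 f (Set.Icc a b) a with hc
  have hD := lapD a b hab f hf hmin hf' hf''
  rw [← hc] at hD
  set L := Real.sqrt (π / (c / 2)) / 2 with hL
  have hπc : 0 < π / (c / 2) := div_pos Real.pi_pos (by linarith)
  have hL0 : 0 < L := by
    rw [hL]
    exact div_pos (Real.sqrt_pos.2 hπc) two_pos
  have hcL : L = 1 / 2 * Real.sqrt (2 * π / c) := by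
    have h1 : π / (c / 2) = 2 * π / c := by
      field_simp
    rw [hL, h1]
    ring
  apply isEquivalent_of_tendsto_one
  · have h2 : Tendsto
        (fun n : ℕ => Real.sqrt n * (∫ x in a..b, Real.exp (-((n:ℝ) * (f x - f a)))) / L)
        atTop (𝓝 1) := by
      have h3 := hD.div_const L
      rwa [div_self hL0.ne'] at h3
    apply Tendsto.congr' _ h2
    filter_upwards [eventually_ge_atTop 1] with n hn1
    have hnn : (0:ℝ) < n := by exact_mod_cast hn1
    have hsn : (0:ℝ) < Real.sqrt n := Real.sqrt_pos.2 hnn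
    have hu_eq : ∫ x in a..b, Real.exp (-(n:ℝ) * f x)
        = Real.exp (-(n:ℝ) * f a) * ∫ x in a..b, Real.exp (-((n:ℝ) * (f x - f a))) := by
      rw [← intervalIntegral.integral_const_mul]
      apply intervalIntegral.integral_congr
      intro x _
      show Real.exp (-(n:ℝ) * f x)
          = Real.exp (-(n:ℝ) * f a) * Real.exp (-((n:ℝ) * (f x - f a)))
      rw [← Real.exp_add]
      congr 1
      ring
    have hv_eq : 1 / 2 * Real.sqrt (2 * π / ((n:ℝ) * c)) * Real.exp (-(n:ℝ) * f a)
        = L / Real.sqrt n * Real.exp (-(n:ℝ) * f a) := by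
      have h4 : 2 * π / ((n:ℝ) * c) = (2 * π / c) / (n:ℝ) := by
        rw [div_div, mul_comm c ((n:ℝ))]
      rw [h4, Real.sqrt_div (by positivity) (n:ℝ), hcL]
      ring
    simp only [Pi.div_apply]
    rw [hu_eq, hv_eq]
    rw [eq_div_iff (by positivity)]
    field_simp
end

section
/- Suppose z : [0,T] → (0,∞) is absolutely continuous with z′ ∈ L¹(0,T) and z′ ≤ 0 a.e. Then for every f ∈ C¹([0,T]) with f(T) = 0: ∫_0^T [−z′(t)·f(t) − z(t)·(e^{f(t)} − 1)] dt ≤ ∫_0^T S(−z′(t)|z(t)) dt. -/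
open MeasureTheory Real intervalIntegral

lemma young_pointwise (a b y : ℝ) (ha : 0 ≤ a) (hb : 0 < b) :
    a * y - b * (Real.exp y - 1) ≤ a * Real.log (a / b) - a + b := by
  rcases eq_or_lt_of_le ha with h | h
  · subst h
    simp only [zero_mul, zero_sub, sub_zero, zero_add, neg_mul]
    nlinarith [Real.exp_pos y]
  · have hab : 0 < a / b := div_pos h hb
    have h1 := Real.add_one_le_exp (y - Real.log (a / b))
    have he : Real.exp (y - Real.log (a / b)) = Real.exp y * (b / a) := by
      rw [Real.exp_sub, Real.exp_log hab]
      field_simp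
    rw [he] at h1
    have hey := Real.exp_pos y
    have : a * (y - Real.log (a / b) + 1) ≤ b * Real.exp y := by
      have := mul_le_mul_of_nonneg_left h1 h.le
      calc a * (y - Real.log (a / b) + 1) ≤ a * (Real.exp y * (b / a)) := this
        _ = b * Real.exp y := by field_simp
    nlinarith

/-- Young-type inequality for the rate integrand: for an absolutely continuous,
positive, non-increasing `z` (given via the fundamental theorem of calculus with
integrable a.e. derivative `z' ≤ 0`) and any `f ∈ C¹` with `f(T) = 0`,
`∫₀ᵀ [−z' f − z (e^f − 1)] ≤ ∫₀ᵀ S(−z'|z)`, with `S(a|b) = a log(a/b) − a + b`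
(the formula covers `S(0|b) = b` since `Real.log 0 = 0`).  The right-hand side is
assumed integrable (otherwise it equals `+∞` and the claim is trivial). -/
theorem young_inequality_rate (T : ℝ) (hT : 0 < T)
    (z z' : ℝ → ℝ)
    (hz'int : IntervalIntegrable z' volume 0 T)
    (hFTC : ∀ t ∈ Set.Icc (0 : ℝ) T, z t = z 0 + ∫ s in (0 : ℝ)..t, z' s)
    (hpos : ∀ t ∈ Set.Icc (0 : ℝ) T, 0 < z t)
    (hz'nonpos : ∀ᵐ t ∂volume, t ∈ Set.Icc (0 : ℝ) T → z' t ≤ 0)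
    (hSint : IntervalIntegrable
      (fun t => (-z' t) * Real.log ((-z' t) / z t) - (-z' t) + z t) volume 0 T)
    (f : ℝ → ℝ) (hf : ContDiff ℝ 1 f) (hfT : f T = 0) :
    (∫ t in (0 : ℝ)..T, ((-z' t) * f t - z t * (Real.exp (f t) - 1)))
      ≤ ∫ t in (0 : ℝ)..T, ((-z' t) * Real.log ((-z' t) / z t) - (-z' t) + z t) := by
  -- z is interval integrable since it coincides with a continuous primitive on [0,T]
  have hguIcc : Set.uIcc (0:ℝ) T = Set.Icc 0 T := Set.uIcc_of_le hT.le
  have hgc : ContinuousOn (fun t => z 0 + ∫ s in (0:ℝ)..t, z' s) (Set.uIcc 0 T) :=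
    continuousOn_const.add (intervalIntegral.continuousOn_primitive_interval' hz'int
      (by rw [hguIcc]; exact Set.left_mem_Icc.2 hT.le))
  have hgint : IntervalIntegrable (fun t => z 0 + ∫ s in (0:ℝ)..t, z' s) volume 0 T :=
    hgc.intervalIntegrable
  have hzint : IntervalIntegrable z volume 0 T := by
    rw [intervalIntegrable_iff_integrableOn_Ioc_of_le hT.le]
    exact hgint.1.congr_fun (fun t ht => (hFTC t ⟨ht.1.le, ht.2⟩).symm) measurableSet_Ioc
  have hL : IntervalIntegrable (fun t => (-z' t) * f t - z t * (Real.exp (f t) - 1))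
      volume 0 T := by
    exact (hz'int.neg.mul_continuousOn hf.continuous.continuousOn).sub
      (hzint.mul_continuousOn (((Real.continuous_exp.comp hf.continuous).sub
        continuous_const).continuousOn))
  refine intervalIntegral.integral_mono_ae_restrict hT.le hL hSint ?_
  rw [Filter.EventuallyLE, ae_restrict_iff' measurableSet_Icc]
  filter_upwards [hz'nonpos] with t ht hmem
  exact young_pointwise (-z' t) (z t) (f t) (by linarith [ht hmem]) (hpos t hmem)
end
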